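/- arXiv:2012.09964 — 11 statements merged into one kernel-verified Lean document; each statement's English description precedes it below -/
import Mathlib

section
/- Let P be any collection of measurement paths in G and let k ≥ 1. If G is k-identifiable with respect to P, then for every set V' ⊆ N of non-monitors with |V'| < k, the network G − V' (with monitor set M and non-monitor set N \ V') is (k − |V'|)-identifiable with respect to the collection of those paths in P that traverse no node of V'. -/
/-! Failure sets `F ≠ F'` of `G − V'` with at most `k − |V'|` nodes extend to distinct failure sets
`F ∪ V'`, `F' ∪ V'` of `G` with at most `k` nodes. A path of `P` separating these fails on a node
outside `F' ∪ V'`, so it avoids `V'` and separates `F` from `F'`. -/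

open SimpleGraph

/-- A measurement path in `G`: a walk together with its two endpoints. -/
abbrev MWalk {V : Type*} (G : SimpleGraph V) := Σ u : V, Σ v : V, G.Walk u v

/-- A measurement path traverses a node `x` iff `x` lies on the walk. -/
def Traverses {V : Type*} {G : SimpleGraph V} (p : MWalk G) (x : V) : Prop :=
  x ∈ p.2.2.support

/-- Two failure sets `F`, `F'` are distinguishable w.r.t. the collection `P` of
measurement paths: some path of `P` traverses a node of one set but no node of
the other. -/
def Distinguishable {V : Type*} {G : SimpleGraph V} (P : Set (MWalk G))
    (F F' : Set V) : Prop :=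
  (∃ p ∈ P, (∃ x ∈ F, Traverses p x) ∧ ∀ x ∈ F', ¬ Traverses p x) ∨
  (∃ p ∈ P, (∃ x ∈ F', Traverses p x) ∧ ∀ x ∈ F, ¬ Traverses p x)

/-- `k`-identifiability w.r.t. paths `P`, where failure sets range over subsets
of the non-monitor set `Nm`. -/
def Identifiable {V : Type*} {G : SimpleGraph V} (P : Set (MWalk G))
    (Nm : Set V) (k : ℕ) : Prop :=
  ∀ F F' : Set V, F ⊆ Nm → F' ⊆ Nm → F.ncard ≤ k → F'.ncard ≤ k → F ≠ F' →
    Distinguishable P F F'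

/-- CAP measurement paths: all walks whose two endpoints are monitors
(endpoints may coincide, nodes may be revisited). -/
def CAP {V : Type*} (G : SimpleGraph V) (M : Set V) : Set (MWalk G) :=
  { p | p.1 ∈ M ∧ p.2.1 ∈ M }

/-- CSP measurement paths: all simple (cycle-free) paths whose two endpoints
are distinct monitors. -/
def CSP {V : Type*} (G : SimpleGraph V) (M : Set V) : Set (MWalk G) :=
  { p | p.1 ∈ M ∧ p.2.1 ∈ M ∧ p.1 ≠ p.2.1 ∧ p.2.2.IsPath }

/-- Every connected component of `G − V'` contains at least one monitor. -/
def ComponentsHaveMonitor {V : Type*} (G : SimpleGraph V) (M : Set V)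
    (V' : Set V) : Prop :=
  ∀ v : ↥(V'ᶜ), ∃ m : ↥(V'ᶜ), (m : V) ∈ M ∧ (G.induce V'ᶜ).Reachable v m

/-- The auxiliary graph on the non-monitors `Nm` plus a new virtual monitor
`m'` (the vertex `none`), where the monitors in `M'` are used to create the
virtual links: edges of `G` between non-monitors are kept; `m'` is joined to
each non-monitor adjacent in `G` to some monitor in `M'`; and two non-monitors
each adjacent in `G` to some monitor in `M'` are joined.
`G* = StarGraph G Mᶜ M` and `G_m = StarGraph G Mᶜ (M \ {m})`. -/
def StarGraph {V : Type*} (G : SimpleGraph V) (Nm M' : Set V) :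
    SimpleGraph (Option ↥Nm) where
  Adj x y :=
    match x, y with
    | none, none => False
    | none, some u => ∃ m ∈ M', G.Adj (u : V) m
    | some u, none => ∃ m ∈ M', G.Adj (u : V) m
    | some u, some w => (u : V) ≠ (w : V) ∧
        (G.Adj (u : V) (w : V) ∨
          ((∃ m ∈ M', G.Adj (u : V) m) ∧ ∃ m ∈ M', G.Adj (w : V) m))
  symm := by
    constructor
    rintro (_ | u) (_ | w) h
    · exact h
    · exact h
    · exact h
    · exact ⟨fun e => h.1 e.symm, h.2.imp (fun hh => hh.symm) fun hh => ⟨hh.2, hh.1⟩⟩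
  loopless := by
    constructor
    rintro (_ | u) h
    · exact h
    · exact h.1 rfl

/-- A graph `H` is `k`-vertex-connected: it has more than `k` vertices and
removing fewer than `k` vertices leaves it connected. -/
def KConnected {W : Type*} (H : SimpleGraph W) (k : ℕ) : Prop :=
  k < Nat.card W ∧ ∀ S : Set W, S.ncard < k → (H.induce Sᶜ).Connected

/-- The vertex connectivity `δ(H)`: the largest `k` such that `H` is
`k`-vertex-connected. -/
noncomputable def vertexConnectivity {W : Type*} (H : SimpleGraph W) : ℕ :=
  sSup { k | KConnected H k }

/-- The maximum identifiability: the largest `k ∈ {0, …, |Nm|}` such that the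
network is `k`-identifiable w.r.t. `P`. -/
noncomputable def maxIdent {V : Type*} {G : SimpleGraph V} (P : Set (MWalk G))
    (Nm : Set V) : ℕ :=
  sSup { k | k ≤ Nm.ncard ∧ Identifiable P Nm k }

/-- `MSC(v)`: the minimum cardinality of a set `V' ⊆ Nm \ {v}` of non-monitors
such that every path of `P` traversing `v` traverses some node of `V'`
(`⊤ = ∞` if no such set exists). -/
noncomputable def MSC {V : Type*} {G : SimpleGraph V} (P : Set (MWalk G))
    (Nm : Set V) (v : V) : ℕ∞ :=
  sInf { n : ℕ∞ | ∃ V' : Set V, V' ⊆ Nm \ {v} ∧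
    (∀ p ∈ P, Traverses p v → ∃ x ∈ V', Traverses p x) ∧ n = (V'.ncard : ℕ∞) }

section

variable {V : Type*} {G : SimpleGraph V} {P : Set (MWalk G)}

theorem exists_separating_avoiding {F F' V' : Set V}
    (h : ∃ p ∈ P, (∃ x ∈ F ∪ V', Traverses p x) ∧ ∀ x ∈ F' ∪ V', ¬ Traverses p x) :
    ∃ p ∈ { p ∈ P | ∀ x ∈ V', ¬ Traverses p x },
      (∃ x ∈ F, Traverses p x) ∧ ∀ x ∈ F', ¬ Traverses p x := by
  obtain ⟨p, hp, ⟨x, hx, hpx⟩, havoid⟩ := h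
  have hF : x ∈ F := hx.resolve_right fun hxV' => havoid x (Or.inr hxV') hpx
  exact ⟨p, ⟨hp, fun y hy => havoid y (Or.inr hy)⟩, ⟨x, hF, hpx⟩,
    fun y hy => havoid y (Or.inl hy)⟩

theorem Distinguishable.of_union {F F' V' : Set V} (h : Distinguishable P (F ∪ V') (F' ∪ V')) :
    Distinguishable { p ∈ P | ∀ x ∈ V', ¬ Traverses p x } F F' :=
  h.imp exists_separating_avoiding exists_separating_avoiding

theorem Identifiable.delete {Nm V' : Set V} {k : ℕ} (hid : Identifiable P Nm k) (hV' : V' ⊆ Nm)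
    (hV'k : V'.ncard ≤ k) :
    Identifiable { p ∈ P | ∀ x ∈ V', ¬ Traverses p x } (Nm \ V') (k - V'.ncard) := by
  intro F F' hF hF' hFk hF'k hne
  have extend_subset {S : Set V} (hS : S ⊆ Nm \ V') : S ∪ V' ⊆ Nm :=
    Set.union_subset (hS.trans Set.sdiff_subset) hV'
  have extend_ncard {S : Set V} (hS : S.ncard ≤ k - V'.ncard) : (S ∪ V').ncard ≤ k :=
    (Set.ncard_union_le S V').trans (by omega)
  have restrict_extend {S : Set V} (hS : S ⊆ Nm \ V') : (S ∪ V') \ V' = S :=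
    Set.union_sdiff_cancel_right (Set.subset_sdiff.1 hS).2.inter_eq.subset
  have extend_ne : F ∪ V' ≠ F' ∪ V' := fun h =>
    hne <| calc
      F = (F ∪ V') \ V' := (restrict_extend hF).symm
      _ = (F' ∪ V') \ V' := by rw [h]
      _ = F' := restrict_extend hF'
  exact (hid _ _ (extend_subset hF) (extend_subset hF') (extend_ncard hFk)
    (extend_ncard hF'k) extend_ne).of_union

end

theorem stmt_1_general {V : Type*} (G : SimpleGraph V)
    (M : Set V) (P : Set (MWalk G)) (k : ℕ)
    (hid : Identifiable P Mᶜ k) :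
    ∀ V' : Set V, V' ⊆ Mᶜ → V'.ncard < k →
      Identifiable { p ∈ P | ∀ x ∈ V', ¬ Traverses p x } (Mᶜ \ V')
        (k - V'.ncard) :=
  fun _ hV' hV'k => hid.delete hV' hV'k.le

/-- Abstract necessary condition: if `G` is `k`-identifiable w.r.t. `P`, then
for every set `V'` of fewer than `k` non-monitors, the network `G − V'`
(non-monitors `Mᶜ \ V'`) is `(k − |V'|)`-identifiable w.r.t. the paths of `P`
traversing no node of `V'`. -/
theorem stmt_1 {V : Type*} [Fintype V] (G : SimpleGraph V) (hG : G.Connected)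
    (M : Set V) (hM : M.Nonempty) (P : Set (MWalk G)) (k : ℕ) (hk : 1 ≤ k)
    (hid : Identifiable P Mᶜ k) :
    ∀ V' : Set V, V' ⊆ Mᶜ → V'.ncard < k →
      Identifiable { p ∈ P | ∀ x ∈ V', ¬ Traverses p x } (Mᶜ \ V')
        (k - V'.ncard) :=
  stmt_1_general G M P k hid
end

section
/- If for every set V' ⊆ N of non-monitors with |V'| ≤ k, every connected component of G − V' contains at least one monitor, then G is k-identifiable under CAP. -/
open SimpleGraph

/-! Let `v` lie in `F` but not in `F'`. Removing the at most `k` non-monitors of `F'` leaves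
`v` in a component containing a monitor `m`, so there is a walk from `v` to `m` avoiding `F'`.
Going from `m` to `v` along it and back is a CAP measurement path that fails under `F` but
not under `F'`. -/

theorem SimpleGraph.Reachable.exists_walk_support_subset_of_induce {V : Type*}
    {G : SimpleGraph V} {s : Set V} {u v : s} (huv : (G.induce s).Reachable u v) :
    ∃ w : G.Walk u v, ∀ x ∈ w.support, x ∈ s := by
  obtain ⟨w⟩ := huv
  refine ⟨w.map (Embedding.induce s).toHom, fun x hx => ?_⟩
  obtain ⟨y, -, rfl⟩ := List.mem_map.mp (w.support_map _ ▸ hx)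
  exact y.2

theorem exists_cap_traverses_avoiding {V : Type*} {G : SimpleGraph V} {M F' : Set V}
    (hF' : ComponentsHaveMonitor G M F') {v : V} (hv : v ∉ F') :
    ∃ p ∈ CAP G M, Traverses p v ∧ ∀ x ∈ F', ¬ Traverses p x := by
  obtain ⟨m, hmM, hvm⟩ := hF' ⟨v, hv⟩
  obtain ⟨w, hw⟩ := hvm.exists_walk_support_subset_of_induce
  refine ⟨⟨m, m, w.reverse.append w⟩, ⟨hmM, hmM⟩, ?_, fun x hxF' hx => ?_⟩
  · exact (Walk.mem_support_append_iff _ _).mpr (Or.inr w.start_mem_support)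
  · have hxw : x ∈ w.support := by
      simpa [Traverses, Walk.mem_support_append_iff, Walk.support_reverse] using hx
    exact hw x hxw hxF'

theorem stmt_2_general {V : Type*} (G : SimpleGraph V)
    (M : Set V) (k : ℕ)
    (h : ∀ V' : Set V, V' ⊆ Mᶜ → V'.ncard ≤ k → ComponentsHaveMonitor G M V') :
    Identifiable (CAP G M) Mᶜ k := by
  intro F F' hF hF' hk hk' hne
  obtain ⟨v, ⟨hvF, hvF'⟩ | ⟨hvF', hvF⟩⟩ := Set.symmDiff_nonempty.mpr hne
  · obtain ⟨p, hp, hpv, hpF'⟩ := exists_cap_traverses_avoiding (h F' hF' hk') hvF'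
    exact Or.inl ⟨p, hp, ⟨v, hvF, hpv⟩, hpF'⟩
  · obtain ⟨p, hp, hpv, hpF⟩ := exists_cap_traverses_avoiding (h F hF hk) hvF
    exact Or.inr ⟨p, hp, ⟨v, hvF', hpv⟩, hpF⟩

/-- Sufficient condition for `k`-identifiability under CAP: whenever at most
`k` non-monitors are removed, every connected component of the remaining graph
contains a monitor. -/
theorem stmt_2 {V : Type*} [Fintype V] (G : SimpleGraph V) (hG : G.Connected)
    (M : Set V) (hM : M.Nonempty) (k : ℕ)
    (h : ∀ V' : Set V, V' ⊆ Mᶜ → V'.ncard ≤ k → ComponentsHaveMonitor G M V') :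
    Identifiable (CAP G M) Mᶜ k :=
  stmt_2_general G M k h
end

section
/- If G is k-identifiable under CAP, then for every set V' ⊆ N of non-monitors with |V'| ≤ k − 1, every connected component of G − V' contains at least one monitor. -/
open SimpleGraph

/-!
If the component of a non-monitor `v` in `G − V'` contained no monitor, the failure sets
`V' ∪ {v}` and `V'` (both of size at most `k`) would have to be distinguished by a
monitor-to-monitor walk through `v` avoiding `V'`; the initial segment of that walk up to `v`
stays in `G − V'` and joins `v` to a monitor.
-/

theorem Distinguishable.exists_traverses_of_insert {V : Type*} {G : SimpleGraph V}
    {P : Set (MWalk G)} {F : Set V} {v : V} (h : Distinguishable P (insert v F) F) :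
    ∃ p ∈ P, Traverses p v ∧ ∀ x ∈ F, ¬ Traverses p x := by
  rcases h with ⟨p, hp, ⟨x, hx, hpx⟩, hpF⟩ | ⟨p, -, ⟨x, hx, hpx⟩, hpF⟩
  · rcases hx with rfl | hx
    · exact ⟨p, hp, hpx, hpF⟩
    · exact absurd hpx (hpF x hx)
  · exact absurd hpx (hpF x (Set.mem_insert_of_mem v hx))

theorem SimpleGraph.Walk.reachable_induce_of_mem_support {V : Type*} {G : SimpleGraph V}
    {s : Set V} {u v w : V} (p : G.Walk u w) (hp : ∀ x ∈ p.support, x ∈ s)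
    (hv : v ∈ p.support) :
    (G.induce s).Reachable ⟨u, hp u p.start_mem_support⟩ ⟨v, hp v hv⟩ := by
  classical
  exact ⟨(p.takeUntil v hv).induce s fun x hx =>
    hp x (p.support_takeUntil_subset_support hv hx)⟩

theorem stmt_3_general {V : Type*} (G : SimpleGraph V)
    (M : Set V) (k : ℕ)
    (hid : Identifiable (CAP G M) Mᶜ k) :
    ∀ V' : Set V, V' ⊆ Mᶜ → V'.ncard < k → ComponentsHaveMonitor G M V' := by
  intro V' hV' hcard v
  by_contra! hno
  have hvM : (v : V) ∉ M := fun h => hno v h (Reachable.refl _)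
  obtain ⟨p, ⟨hpM, -⟩, hpv, hpV'⟩ :=
    (hid (insert (v : V) V') V' (Set.insert_subset hvM hV') hV'
      ((Set.ncard_insert_le _ _).trans hcard) hcard.le
      (Set.insert_ne_self.mpr v.2)).exists_traverses_of_insert
  have hpS : ∀ x ∈ p.2.2.support, x ∈ V'ᶜ := fun x hx hxV' => hpV' x hxV' hx
  exact hno _ hpM (p.2.2.reachable_induce_of_mem_support hpS hpv).symm

/-- Necessary condition for `k`-identifiability under CAP: whenever at most
`k − 1` non-monitors are removed, every connected component of the remaining
graph contains a monitor. -/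
theorem stmt_3 {V : Type*} [Fintype V] (G : SimpleGraph V) (hG : G.Connected)
    (M : Set V) (hM : M.Nonempty) (k : ℕ)
    (hid : Identifiable (CAP G M) Mᶜ k) :
    ∀ V' : Set V, V' ⊆ Mᶜ → V'.ncard < k → ComponentsHaveMonitor G M V' :=
  stmt_3_general G M k hid
end

section
/- Let s be an integer with 0 ≤ s ≤ σ − 1. Then the following are equivalent: (1) for every set V' ⊆ N of non-monitors with |V'| ≤ s, every connected component of G − V' contains at least one monitor; (2) the auxiliary graph G* is (s+1)-vertex-connected. -/
open SimpleGraph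

/-! Both directions compare reachability in `G − V'` with reachability in `G* − S`, where `S`
and `V'` contain the same non-monitors. A walk in `G − V'` from a non-monitor to a monitor
becomes, up to its last non-monitor, a walk in `G* − S` to a non-monitor adjacent to a monitor;
all such vertices form a clique in `G*`, together with `m'` whenever it survives. Conversely an
edge of `G* − S` at a non-monitor either is an edge of `G` or leads from a vertex adjacent to a
monitor, so a non-monitor reaching `m'` in `G* − S` reaches a monitor in `G − V'`. -/

theorem SimpleGraph.Reachable.imp_of_adj_imp {W : Type*} {H : SimpleGraph W} {P : W → Prop}
    (hP : ∀ ⦃x y⦄, H.Adj x y → P x → P y) {x y : W} (h : H.Reachable x y) :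
    P x → P y := by
  rw [reachable_iff_reflTransGen] at h
  induction h with
  | refl => exact id
  | tail _ hab ih => exact hP hab ∘ ih

namespace StarGraph

variable {V : Type*} {G : SimpleGraph V} {M V' : Set V} {S : Set (Option ↥Mᶜ)}

def IsGateway (G : SimpleGraph V) (M : Set V) (u : V) : Prop := ∃ m ∈ M, G.Adj u m

def ReachesMonitor (G : SimpleGraph V) (M V' : Set V) (v : ↥V'ᶜ) : Prop :=
  ∃ m : ↥V'ᶜ, (m : V) ∈ M ∧ (G.induce V'ᶜ).Reachable v m

theorem ReachesMonitor.of_isGateway (hV' : V' ⊆ Mᶜ) {w : ↥V'ᶜ} (hw : IsGateway G M w) :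
    ReachesMonitor G M V' w :=
  let ⟨m, hmM, hwm⟩ := hw
  have hmV' : m ∈ V'ᶜ := fun h => hV' h hmM
  ⟨⟨m, hmV'⟩, hmM, (show (G.induce V'ᶜ).Adj w ⟨m, hmV'⟩ from hwm).reachable⟩

theorem ReachesMonitor.of_adj {u w : ↥V'ᶜ} (hwu : G.Adj w u) (hu : ReachesMonitor G M V' u) :
    ReachesMonitor G M V' w :=
  let ⟨m, hmM, hum⟩ := hu
  ⟨m, hmM, (show (G.induce V'ᶜ).Adj w u from hwu).reachable.trans hum⟩

variable (hS : ∀ u : ↥Mᶜ, some u ∈ S ↔ (u : V) ∈ V')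
include hS

theorem exists_isGateway_reachable (hV' : ComponentsHaveMonitor G M V') (u : ↥Mᶜ)
    (hu : some u ∈ Sᶜ) :
    ∃ (g : ↥Mᶜ) (hg : some g ∈ Sᶜ), IsGateway G M g ∧
      ((StarGraph G Mᶜ M).induce Sᶜ).Reachable ⟨some u, hu⟩ ⟨some g, hg⟩ := by
  let toStar (x : ↥V'ᶜ) (hx : (x : V) ∉ M) : ↥Sᶜ :=
    ⟨some ⟨x, hx⟩, fun h => x.2 ((hS _).1 h)⟩
  let Q (x : ↥V'ᶜ) : Prop :=
    (x : V) ∈ M ∨ ∃ (hx : (x : V) ∉ M) (g : ↥Mᶜ) (hg : some g ∈ Sᶜ),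
      IsGateway G M g ∧ ((StarGraph G Mᶜ M).induce Sᶜ).Reachable (toStar x hx) ⟨some g, hg⟩
  have hQ : ∀ ⦃x y⦄, (G.induce V'ᶜ).Adj x y → Q x → Q y := by
    intro x y hxy hx
    by_cases hyM : (y : V) ∈ M
    · exact Or.inl hyM
    refine Or.inr ⟨hyM, ?_⟩
    rcases hx with hxM | ⟨hxM, g, hg, hgate, hxg⟩
    · exact ⟨_, (toStar y hyM).2, ⟨x, hxM, hxy.symm⟩, Reachable.rfl⟩
    · have hyx : ((StarGraph G Mᶜ M).induce Sᶜ).Adj (toStar y hyM) (toStar x hxM) :=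
        ⟨fun h => hxy.ne (Subtype.ext h.symm), Or.inl hxy.symm⟩
      exact ⟨g, hg, hgate, hyx.reachable.trans hxg⟩
  have huV' : (u : V) ∈ V'ᶜ := fun h => hu ((hS u).2 h)
  obtain ⟨t, htM, hut⟩ := hV' ⟨u, huV'⟩
  rcases hut.symm.imp_of_adj_imp hQ (Or.inl htM) with huM | ⟨_, g, hg, hgate, hug⟩
  · exact absurd huM u.2
  · exact ⟨g, hg, hgate, hug⟩

theorem induce_compl_connected (hV' : ComponentsHaveMonitor G M V') (hne : Sᶜ.Nonempty) :
    ((StarGraph G Mᶜ M).induce Sᶜ).Connected := by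
  rw [connected_iff]
  refine ⟨?_, hne.to_subtype⟩
  rintro ⟨_ | u, hu⟩ ⟨_ | w, hw⟩
  · rfl
  · obtain ⟨g, hg, hgate, hwg⟩ := exists_isGateway_reachable hS hV' w hw
    have hug : ((StarGraph G Mᶜ M).induce Sᶜ).Adj ⟨none, hu⟩ ⟨some g, hg⟩ := hgate
    exact hug.reachable.trans hwg.symm
  · obtain ⟨g, hg, hgate, hug⟩ := exists_isGateway_reachable hS hV' u hu
    have hgw : ((StarGraph G Mᶜ M).induce Sᶜ).Adj ⟨some g, hg⟩ ⟨none, hw⟩ := hgate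
    exact hug.trans hgw.reachable
  · obtain ⟨g, hg, hgate, hug⟩ := exists_isGateway_reachable hS hV' u hu
    obtain ⟨g', hg', hgate', hwg'⟩ := exists_isGateway_reachable hS hV' w hw
    by_cases hgg' : g = g'
    · subst hgg'
      exact hug.trans hwg'.symm
    · have hadj : ((StarGraph G Mᶜ M).induce Sᶜ).Adj ⟨some g, hg⟩ ⟨some g', hg'⟩ :=
        ⟨hgg' ∘ Subtype.ext, Or.inr ⟨hgate, hgate'⟩⟩
      exact (hug.trans hadj.reachable).trans hwg'.symm

theorem componentsHaveMonitor_of_preconnected (hV' : V' ⊆ Mᶜ) (hnone : none ∈ Sᶜ)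
    (h : ((StarGraph G Mᶜ M).induce Sᶜ).Preconnected) : ComponentsHaveMonitor G M V' := by
  let P (x : ↥Sᶜ) : Prop := ∀ u ∈ (x : Option ↥Mᶜ), ∀ hu : (u : V) ∈ V'ᶜ,
    ReachesMonitor G M V' ⟨u, hu⟩
  have hP : ∀ ⦃x y⦄, ((StarGraph G Mᶜ M).induce Sᶜ).Adj x y → P x → P y := by
    rintro ⟨x, hxS⟩ ⟨y, hyS⟩ hxy hx w rfl hw
    rcases x with _ | u
    · exact ReachesMonitor.of_isGateway hV' hxy
    · have huV' : (u : V) ∈ V'ᶜ := fun h => hxS ((hS u).2 h)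
      rcases hxy.2 with huw | ⟨-, hgate⟩
      · exact (hx u rfl huV').of_adj huw.symm
      · exact ReachesMonitor.of_isGateway hV' hgate
  intro v
  by_cases hvM : (v : V) ∈ M
  · exact ⟨v, hvM, Reachable.rfl⟩
  have hvS : some ⟨(v : V), hvM⟩ ∈ Sᶜ := fun h => v.2 ((hS _).1 h)
  exact (h ⟨none, hnone⟩ ⟨_, hvS⟩).imp_of_adj_imp hP (by simp [P]) _ rfl v.2

end StarGraph

open StarGraph in
theorem stmt_4_general {V : Type*} (G : SimpleGraph V)
    (M : Set V) (s : ℕ) (hs : s + 1 ≤ Mᶜ.ncard) :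
    (∀ V' : Set V, V' ⊆ Mᶜ → V'.ncard ≤ s → ComponentsHaveMonitor G M V') ↔
      KConnected (StarGraph G Mᶜ M) (s + 1) := by
  have : Finite ↥Mᶜ := (Set.finite_of_ncard_pos (by omega)).to_subtype
  have hcard : Nat.card (Option ↥Mᶜ) = Mᶜ.ncard + 1 := by
    rw [Finite.card_option, Nat.card_coe_set_eq]
  constructor
  · refine fun h => ⟨by omega, fun S hScard => ?_⟩
    have hV'S : (Subtype.val '' (some ⁻¹' S)).ncard ≤ S.ncard := by
      rw [Set.ncard_image_of_injective _ Subtype.val_injective,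
        ← Set.ncard_image_of_injective _ (Option.some_injective _)]
      exact Set.ncard_le_ncard (Set.image_preimage_subset _ _)
    have hne : Sᶜ.Nonempty := Set.nonempty_compl.2 fun hSu => by
      rw [hSu, Set.ncard_univ] at hScard
      omega
    refine induce_compl_connected
      (fun _ => (Subtype.val_injective.mem_set_image (s := some ⁻¹' S)).symm)
      (h (Subtype.val '' (some ⁻¹' S)) ?_ (by omega)) hne
    rintro _ ⟨u, -, rfl⟩
    exact u.2
  · rintro ⟨-, h⟩ V' hV'M hV'
    have hScard : (some '' (Subtype.val ⁻¹' V' : Set ↥Mᶜ)).ncard = V'.ncard := by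
      rw [Set.ncard_image_of_injective _ (Option.some_injective _),
        Set.ncard_preimage_of_injective_subset_range Subtype.val_injective
          (by rwa [Subtype.range_val])]
    exact componentsHaveMonitor_of_preconnected (S := some '' (Subtype.val ⁻¹' V'))
      (fun _ => (Option.some_injective _).mem_set_image) hV'M (by rintro ⟨_, _, ⟨⟩⟩)
      (h _ (by omega)).preconnected

/-- For `0 ≤ s ≤ σ − 1`: every component of `G − V'` contains a monitor for
every set `V'` of at most `s` non-monitors iff the auxiliary graph `G*` is
`(s+1)`-vertex-connected. -/
theorem stmt_4 {V : Type*} [Fintype V] (G : SimpleGraph V) (hG : G.Connected)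
    (M : Set V) (hM : M.Nonempty) (s : ℕ) (hs : s + 1 ≤ Mᶜ.ncard) :
    (∀ V' : Set V, V' ⊆ Mᶜ → V'.ncard ≤ s → ComponentsHaveMonitor G M V') ↔
      KConnected (StarGraph G Mᶜ M) (s + 1) :=
  stmt_4_general G M s hs
end

section
/- G is σ-identifiable under CAP if and only if every non-monitor is adjacent in G to at least one monitor. -/
open SimpleGraph

/-! A walk that enters a non-monitor `v` must leave it again to reach a monitor, and its next vertex
is a neighbour of `v`. So if `v` has no monitor neighbour, every CAP walk through `v` also traverses
another non-monitor, and the failure sets `N` and `N \ {v}` cannot be told apart. Conversely, a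
monitor neighbour `m` of `v` gives the walk `m → v → m`, which isolates `v` among the non-monitors;
such walks separate any two distinct failure sets. -/

theorem SimpleGraph.Walk.exists_adj_mem_support {V : Type*} {G : SimpleGraph V} {u v w : V}
    (q : G.Walk u w) (hv : v ∈ q.support) (hvw : v ≠ w) : ∃ y ∈ q.support, G.Adj v y := by
  classical
  set r := q.dropUntil v hv
  exact ⟨r.snd, q.support_dropUntil_subset_support hv (r.getVert_mem_support 1),
    Walk.adj_snd (Walk.not_nil_of_ne hvw)⟩

section Identifiability

variable {V : Type*} {G : SimpleGraph V} {P : Set (MWalk G)} {Nm : Set V}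

theorem identifiable_of_forall_exists_isolating
    (h : ∀ v ∈ Nm, ∃ p ∈ P, ∀ x ∈ Nm, Traverses p x ↔ x = v) (k : ℕ) :
    Identifiable P Nm k := by
  have separate : ∀ {F F' : Set V}, F' ⊆ Nm → ∀ v ∈ F, v ∈ Nm → v ∉ F' →
      ∃ p ∈ P, (∃ x ∈ F, Traverses p x) ∧ ∀ x ∈ F', ¬ Traverses p x := by
    intro F F' hF' v hvF hv hvF'
    obtain ⟨p, hp, hiso⟩ := h v hv
    refine ⟨p, hp, ⟨v, hvF, (hiso v hv).2 rfl⟩, fun x hx hpx => ?_⟩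
    exact hvF' ((hiso x (hF' hx)).1 hpx ▸ hx)
  intro F F' hF hF' _ _ hne
  by_cases hsub : F ⊆ F'
  · obtain ⟨v, hvF', hvF⟩ := Set.not_subset.mp fun h' => hne (hsub.antisymm h')
    exact Or.inr (separate hF v hvF' (hF' hvF') hvF)
  · obtain ⟨v, hvF, hvF'⟩ := Set.not_subset.mp hsub
    exact Or.inl (separate hF' v hvF (hF hvF) hvF')

theorem not_distinguishable_sdiff_singleton {v : V}
    (h : ∀ p ∈ P, Traverses p v → ∃ x ∈ Nm, x ≠ v ∧ Traverses p x) :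
    ¬ Distinguishable P Nm (Nm \ {v}) := by
  rintro (⟨p, hp, ⟨x, hx, hpx⟩, hnone⟩ | ⟨p, _, ⟨x, hx, hpx⟩, hnone⟩)
  · by_cases hxv : x = v
    · obtain ⟨y, hy, hyv, hpy⟩ := h p hp (hxv ▸ hpx)
      exact hnone y ⟨hy, hyv⟩ hpy
    · exact hnone x ⟨hx, hxv⟩ hpx
  · exact hnone x hx.1 hpx

end Identifiability

section CAP

variable {V : Type*} {G : SimpleGraph V} {M : Set V} {v m : V}

theorem exists_cap_isolating (hm : m ∈ M) (hvm : G.Adj v m) :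
    ∃ p ∈ CAP G M, ∀ x ∈ Mᶜ, Traverses p x ↔ x = v := by
  refine ⟨⟨m, m, .cons hvm.symm (.cons hvm .nil)⟩, ⟨hm, hm⟩, fun x hx => ?_⟩
  have hxm : x ≠ m := fun h => hx (h ▸ hm)
  simp [Traverses, hxm]

theorem cap_traverses_ne_of_forall_not_adj (hv : v ∉ M) (hadj : ∀ m ∈ M, ¬ G.Adj v m) :
    ∀ p ∈ CAP G M, Traverses p v → ∃ x ∈ Mᶜ, x ≠ v ∧ Traverses p x := by
  rintro ⟨u, w, q⟩ ⟨-, hw⟩ hpv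
  obtain ⟨y, hy, hvy⟩ := q.exists_adj_mem_support hpv fun h => hv (h ▸ hw)
  exact ⟨y, fun hyM => hadj y hyM hvy, hvy.ne.symm, hy⟩

end CAP

theorem stmt_5_general {V : Type*} (G : SimpleGraph V)
    (M : Set V) :
    Identifiable (CAP G M) Mᶜ Mᶜ.ncard ↔ ∀ v ∈ Mᶜ, ∃ m ∈ M, G.Adj v m := by
  constructor
  · intro h v hv
    by_contra! hadj
    exact not_distinguishable_sdiff_singleton (cap_traverses_ne_of_forall_not_adj hv hadj)
      (h _ _ subset_rfl Set.sdiff_subset le_rfl (Set.ncard_sdiff_singleton_le _ _)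
        (Set.sdiff_singleton_ssubset.mpr hv).ne')
  · intro h
    refine identifiable_of_forall_exists_isolating (fun v hv => ?_) _
    obtain ⟨m, hm, hvm⟩ := h v hv
    exact exists_cap_isolating hm hvm

/-- `G` is `σ`-identifiable under CAP iff every non-monitor is adjacent to at
least one monitor. -/
theorem stmt_5 {V : Type*} [Fintype V] (G : SimpleGraph V) (hG : G.Connected)
    (M : Set V) (hM : M.Nonempty) :
    Identifiable (CAP G M) Mᶜ Mᶜ.ncard ↔ ∀ v ∈ Mᶜ, ∃ m ∈ M, G.Adj v m :=
  stmt_5_general G M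
end

section
/- If G is k-identifiable under CSP, then for every set V' ⊆ V with |V'| ≤ k that contains at most one monitor, every connected component of G − V' contains at least one monitor. -/
open SimpleGraph

/-! Suppose the component of a vertex `v ∉ V'` in `G − V'` has no monitor, and let `u ∈ V'` be
the only monitor of `V'`, if there is one. Then every walk from `v` to a monitor meets `V'`, so
every CSP path through `v` meets `V'` on both sides of `v`, hence in two distinct nodes, one of
which lies in `V' \ {u}`. Thus the failure sets `V' \ {u}` and `insert v (V' \ {u})`, both of
size at most `k`, fail exactly the same CSP paths. -/

theorem Set.exists_mem_inter_subset_singleton {α : Type*} {s t : Set α} (hs : s.Nonempty)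
    (hst : (s ∩ t).ncard ≤ 1) (hfin : (s ∩ t).Finite := by toFinite_tac) :
    ∃ u ∈ s, s ∩ t ⊆ {u} := by
  rcases (s ∩ t).eq_empty_or_nonempty with he | ⟨u, hu⟩
  · obtain ⟨u, hu⟩ := hs
    exact ⟨u, hu, he ▸ Set.empty_subset _⟩
  · exact ⟨u, hu.1, fun x hx => (Set.ncard_le_one hfin).1 hst x hx u hu⟩

namespace SimpleGraph

variable {V : Type*} {G : SimpleGraph V}

theorem Walk.exists_mem_support_of_forall_not_reachable_induce {S M : Set V}
    {v : ↥Sᶜ} (hv : ∀ m : ↥Sᶜ, (m : V) ∈ M → ¬ (G.induce Sᶜ).Reachable v m)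
    {m : V} (hm : m ∈ M) (q : G.Walk v m) : ∃ x ∈ q.support, x ∈ S := by
  by_contra! hq
  exact hv _ hm (q.induce Sᶜ hq).reachable

theorem Walk.IsPath.exists_ne_mem_support {S : Set V} {a b v : V} {p : G.Walk a b}
    (hp : p.IsPath) (hv : v ∈ p.support) (hvS : v ∉ S)
    (ha : ∀ q : G.Walk v a, ∃ x ∈ q.support, x ∈ S)
    (hb : ∀ q : G.Walk v b, ∃ x ∈ q.support, x ∈ S) :
    ∃ x ∈ S, ∃ y ∈ S, x ≠ y ∧ x ∈ p.support ∧ y ∈ p.support := by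
  obtain ⟨q, r, rfl⟩ := p.mem_support_iff_exists_append.mp hv
  obtain ⟨x, hxq, hxS⟩ := ha q.reverse
  obtain ⟨y, hyr, hyS⟩ := hb r
  rw [Walk.support_reverse, List.mem_reverse] at hxq
  exact ⟨x, hxS, y, hyS,
    hp.ne_of_mem_support_of_append (ne_of_mem_of_not_mem hyS hvS) hxq hyr,
    (Walk.mem_support_append_iff q r).2 (.inl hxq),
    (Walk.mem_support_append_iff q r).2 (.inr hyr)⟩

end SimpleGraph

theorem CSP.exists_ne_traverses_of_forall_not_reachable {V : Type*} {G : SimpleGraph V}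
    {M V' : Set V} {v : ↥V'ᶜ}
    (hv : ∀ m : ↥V'ᶜ, (m : V) ∈ M → ¬ (G.induce V'ᶜ).Reachable v m)
    {p : MWalk G} (hp : p ∈ CSP G M) (hpv : Traverses p v) :
    ∃ x ∈ V', ∃ y ∈ V', x ≠ y ∧ Traverses p x ∧ Traverses p y :=
  hp.2.2.2.exists_ne_mem_support hpv v.2
    (Walk.exists_mem_support_of_forall_not_reachable_induce hv hp.1)
    (Walk.exists_mem_support_of_forall_not_reachable_induce hv hp.2.1)

/-- Necessary condition for `k`-identifiability under CSP: whenever at most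
`k` nodes containing at most one monitor are removed, every connected component
of the remaining graph contains a monitor. -/
theorem stmt_7 {V : Type*} [Fintype V] (G : SimpleGraph V) (hG : G.Connected)
    (M : Set V) (hM : M.Nonempty) (k : ℕ)
    (hid : Identifiable (CSP G M) Mᶜ k) :
    ∀ V' : Set V, V'.ncard ≤ k → (V' ∩ M).ncard ≤ 1 →
      ComponentsHaveMonitor G M V' := by
  intro V' hcard hcap
  by_contra hV'
  obtain ⟨v, hv⟩ :
      ∃ v : ↥V'ᶜ, ∀ m : ↥V'ᶜ, (m : V) ∈ M → ¬ (G.induce V'ᶜ).Reachable v m := by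
    unfold ComponentsHaveMonitor at hV'
    push Not at hV'
    exact hV'
  have hvM : (v : V) ∉ M := fun hm => hv v hm .rfl
  have hV'ne : V'.Nonempty := by
    obtain ⟨m, hm⟩ := hM
    obtain ⟨x, -, hx⟩ := Walk.exists_mem_support_of_forall_not_reachable_induce hv hm
      (hG.preconnected v m).some
    exact ⟨x, hx⟩
  obtain ⟨u, huV', hu⟩ := Set.exists_mem_inter_subset_singleton hV'ne hcap
  have hA : V' \ {u} ⊆ Mᶜ := fun x hx hxM => hx.2 (hu ⟨hx.1, hxM⟩)
  rcases hid (V' \ {u}) (insert (v : V) (V' \ {u})) hA (Set.insert_subset hvM hA)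
      ((Set.ncard_sdiff_singleton_le _ _).trans hcard)
      ((Set.ncard_exchange v.2 huV').le.trans hcard)
      (fun h => v.2 (h ▸ Set.mem_insert _ _ : (v : V) ∈ V' \ {u}).1)
    with ⟨p, -, ⟨x, hx, hpx⟩, hp⟩ | ⟨p, hpP, ⟨x, hx, hpx⟩, hp⟩
  · exact hp x (Set.mem_insert_of_mem _ hx) hpx
  · have hpv : Traverses p v := by
      rcases hx with rfl | hx
      · exact hpx
      · exact absurd hpx (hp x hx)
    obtain ⟨y, hy, z, hz, hyz, hpy, hpz⟩ :=
      CSP.exists_ne_traverses_of_forall_not_reachable hv hpP hpv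
    by_cases hyu : y = u
    · exact hp z ⟨hz, fun hzu => hyz (hyu.trans hzu.symm)⟩ hpz
    · exact hp y ⟨hy, hyu⟩ hpy
end

section
/- Suppose σ ≥ 1. G is (σ−1)-identifiable under CSP if and only if at most one non-monitor has fewer than two monitor neighbors, and, if such a non-monitor v exists, then v is adjacent in G to exactly one monitor and to every other non-monitor (i.e., to all nodes of N \ {v}). -/
open SimpleGraph

/-!
A CSP path is simple with monitor endpoints, so every non-monitor on it is an inner vertex with two
distinct neighbours on the path. Comparing the failure sets `N \ {u}` and `N \ {w}` thus forces one
of `u`, `w` to have two monitor neighbours, and comparing `N \ {u, v}` with `N \ {u}` forces a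
deficient `v` to be adjacent to `u` and to a monitor. Conversely, a symmetric-difference node `z`
with two monitor neighbours is isolated by the path `m₁ – z – m₂`; otherwise `z` is the unique
deficient node, the larger set misses some non-monitor `u`, and the path `m₀ – z – u – m`, with
`m₀` the monitor neighbour of `z` and `m ≠ m₀` one of `u`, separates the two sets.
-/

open SimpleGraph

namespace SimpleGraph.Walk

variable {V : Type*} {G : SimpleGraph V}

theorem IsPath.exists_adj_adj_of_mem_support {a b v : V} {p : G.Walk a b} (hp : p.IsPath)
    (hv : v ∈ p.support) (hva : v ≠ a) (hvb : v ≠ b) :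
    ∃ x y, x ≠ y ∧ G.Adj v x ∧ G.Adj v y ∧ x ∈ p.support ∧ y ∈ p.support := by
  obtain ⟨n, rfl, hn⟩ := mem_support_iff_exists_getVert.mp hv
  have hn0 : n ≠ 0 := by rintro rfl; exact hva p.getVert_zero
  have hnl : n ≠ p.length := by rintro rfl; exact hvb p.getVert_length
  obtain ⟨k, rfl⟩ := Nat.exists_eq_succ_of_ne_zero hn0
  refine ⟨p.getVert k, p.getVert (k + 2), fun h => ?_, (p.adj_getVert_succ (by omega)).symm,
    p.adj_getVert_succ (by omega), p.getVert_mem_support _, p.getVert_mem_support _⟩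
  have := hp.getVert_injOn (show k ≤ p.length by omega) (show k + 2 ≤ p.length by omega) h
  omega

end SimpleGraph.Walk

theorem Distinguishable.symm {V : Type*} {G : SimpleGraph V} {P : Set (MWalk G)} {F F' : Set V}
    (h : Distinguishable P F F') : Distinguishable P F' F :=
  Or.symm h

theorem exists_adj_mem_of_connected {V : Type*} {G : SimpleGraph V} (hG : G.Connected)
    {M : Set V} (hM : M.Nonempty) {v : V} (hv : v ∉ M) (hN : ∀ u ∉ M, u = v) :
    ∃ m ∈ M, G.Adj v m := by
  obtain ⟨m, hm⟩ := hM
  obtain ⟨p⟩ := hG.preconnected v m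
  have hadj := p.adj_snd (Walk.not_nil_of_ne fun h => hv (h ▸ hm))
  exact ⟨p.snd, by_contra fun h => hadj.ne (hN _ h).symm, hadj⟩

section CSP

variable {V : Type*} {G : SimpleGraph V} {M : Set V}

theorem exists_adj_adj_of_mem_CSP {p : MWalk G} (hp : p ∈ CSP G M) {v : V} (hv : v ∉ M)
    (ht : Traverses p v) :
    ∃ x y, x ≠ y ∧ G.Adj v x ∧ G.Adj v y ∧ Traverses p x ∧ Traverses p y :=
  hp.2.2.2.exists_adj_adj_of_mem_support ht (fun h => hv (h ▸ hp.1)) fun h => hv (h ▸ hp.2.1)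

theorem one_lt_ncard_of_mem_CSP_of_avoid [Finite V] {p : MWalk G} (hp : p ∈ CSP G M) {x w : V}
    (hx : x ∉ M) (ht : Traverses p x) (havoid : ∀ y ∈ Mᶜ \ {w}, ¬ Traverses p y) :
    1 < {m ∈ M | G.Adj w m}.ncard := by
  obtain rfl : x = w := by_contra fun h => havoid x ⟨hx, h⟩ ht
  obtain ⟨y₁, y₂, hy, h₁, h₂, ht₁, ht₂⟩ := exists_adj_adj_of_mem_CSP hp hx ht
  have hmem : ∀ y, G.Adj x y → Traverses p y → y ∈ M := fun y hxy hty =>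
    by_contra fun hy => havoid y ⟨hy, hxy.ne'⟩ hty
  exact (Set.one_lt_ncard_iff (Set.toFinite _)).mpr ⟨y₁, y₂, ⟨hmem y₁ h₁ ht₁, h₁⟩, ⟨hmem y₂ h₂ ht₂, h₂⟩, hy⟩

theorem adj_of_mem_CSP_of_avoid [Finite V] {p : MWalk G} (hp : p ∈ CSP G M) {u v : V}
    (hv : v ∉ M) (ht : Traverses p v) (havoid : ∀ y ∈ Mᶜ \ {v, u}, ¬ Traverses p y)
    (hlt : {m ∈ M | G.Adj v m}.ncard < 2) :
    G.Adj v u ∧ ∃ m ∈ M, G.Adj v m := by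
  obtain ⟨x, y, hxy, hvx, hvy, htx, hty⟩ := exists_adj_adj_of_mem_CSP hp hv ht
  have hmem : ∀ y, G.Adj v y → Traverses p y → y ∈ M ∨ y = u := by
    intro y hvy hty
    by_contra h
    push Not at h
    exact havoid y ⟨h.1, by simp [hvy.ne', h.2]⟩ hty
  rcases hmem x hvx htx with hx | rfl <;> rcases hmem y hvy hty with hy | rfl
  · have : 1 < {m ∈ M | G.Adj v m}.ncard :=
      (Set.one_lt_ncard_iff (Set.toFinite _)).mpr ⟨x, y, ⟨hx, hvx⟩, ⟨hy, hvy⟩, hxy⟩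
    omega
  · exact ⟨hvy, x, hx, hvx⟩
  · exact ⟨hvx, y, hy, hvy⟩
  · exact absurd rfl hxy

theorem distinguishable_CSP_of_one_lt_ncard {F F' : Set V} {z : V} (hF' : F' ⊆ Mᶜ) (hzF : z ∈ F)
    (hzF' : z ∉ F') (hz : 1 < {m ∈ M | G.Adj z m}.ncard) :
    Distinguishable (CSP G M) F F' := by
  obtain ⟨m₁, m₂, ⟨hm₁, hzm₁⟩, ⟨hm₂, hzm₂⟩, hm⟩ :=
    (Set.one_lt_ncard_iff (Set.finite_of_ncard_pos (by omega))).mp hz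
  refine Or.inl ⟨⟨m₁, m₂, .cons hzm₁.symm (.cons hzm₂ .nil)⟩, ⟨hm₁, hm₂, hm, ?_⟩,
    ⟨z, hzF, by simp [Traverses]⟩, ?_⟩
  · simp [Walk.cons_isPath_iff, hzm₁.ne', hzm₂.ne, hm]
  · rintro x hx ht
    simp only [Traverses, Walk.support_cons, Walk.support_nil, List.mem_cons,
      List.not_mem_nil, or_false] at ht
    rcases ht with rfl | rfl | rfl
    exacts [hF' hx hm₁, hzF' hx, hF' hx hm₂]

theorem distinguishable_CSP_of_adj_of_one_lt_ncard {F F' : Set V} {z u m₀ : V} (hF' : F' ⊆ Mᶜ)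
    (hzF : z ∈ F) (hzF' : z ∉ F') (hz : z ∉ M) (hm₀ : m₀ ∈ M) (hzm₀ : G.Adj z m₀)
    (hu : u ∉ M) (huF' : u ∉ F') (hzu : G.Adj z u) (hu2 : 1 < {m ∈ M | G.Adj u m}.ncard) :
    Distinguishable (CSP G M) F F' := by
  obtain ⟨m, ⟨hm, hum⟩, hmm₀⟩ := Set.exists_ne_of_one_lt_ncard hu2 m₀
  have hm₀u : m₀ ≠ u := fun h => hu (h ▸ hm₀)
  have hzm : z ≠ m := fun h => hz (h ▸ hm)
  refine Or.inl ⟨⟨m₀, m, .cons hzm₀.symm (.cons hzu (.cons hum .nil))⟩, ⟨hm₀, hm, hmm₀.symm, ?_⟩,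
    ⟨z, hzF, by simp [Traverses]⟩, ?_⟩
  · simp [Walk.cons_isPath_iff, hzm₀.ne', hm₀u, hmm₀.symm, hzu.ne, hzm, hum.ne]
  · rintro x hx ht
    simp only [Traverses, Walk.support_cons, Walk.support_nil, List.mem_cons,
      List.not_mem_nil, or_false] at ht
    rcases ht with rfl | rfl | rfl | rfl
    exacts [hF' hx hm₀, hzF' hx, huF' hx, hF' hx hm]

theorem distinguishable_CSP_of_subset [Finite V] {F F' : Set V} {z : V} (hF : F ⊆ Mᶜ)
    (hcard : F.ncard ≤ Mᶜ.ncard - 1) (hF'F : F' ⊆ F) (hzF : z ∈ F) (hzF' : z ∉ F')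
    (hz1 : {m ∈ M | G.Adj z m}.ncard = 1) (hzadj : ∀ u ∈ Mᶜ, u ≠ z → G.Adj z u)
    (hothers : ∀ u ∈ Mᶜ, u ≠ z → 1 < {m ∈ M | G.Adj u m}.ncard) :
    Distinguishable (CSP G M) F F' := by
  obtain ⟨m₀, hm₀, hzm₀⟩ := Set.nonempty_of_ncard_ne_zero (s := {m ∈ M | G.Adj z m}) (by omega)
  have hσ : 0 < Mᶜ.ncard := (Set.ncard_pos (Set.toFinite _)).mpr ⟨z, hF hzF⟩
  obtain ⟨u, hu, huF⟩ := Set.exists_mem_notMem_of_ncard_lt_ncard (by omega : F.ncard < Mᶜ.ncard)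
  have huz : u ≠ z := fun h => huF (h ▸ hzF)
  exact distinguishable_CSP_of_adj_of_one_lt_ncard (hF'F.trans hF) hzF hzF' (hF hzF) hm₀ hzm₀ hu
    (fun h => huF (hF'F h)) (hzadj u hu huz) (hothers u hu huz)

theorem Identifiable.eq_of_ncard_lt_two [Finite V]
    (hid : Identifiable (CSP G M) Mᶜ (Mᶜ.ncard - 1)) {u w : V} (hu : u ∉ M) (hw : w ∉ M)
    (hu2 : {m ∈ M | G.Adj u m}.ncard < 2) (hw2 : {m ∈ M | G.Adj w m}.ncard < 2) : u = w := by
  by_contra huw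
  have hne : Mᶜ \ {u} ≠ Mᶜ \ {w} := fun h =>
    (h ▸ (⟨hw, Ne.symm huw⟩ : w ∈ Mᶜ \ {u}) : w ∈ Mᶜ \ {w}).2 rfl
  rcases hid _ _ Set.sdiff_subset Set.sdiff_subset (Set.ncard_sdiff_singleton_of_mem hu).le
      (Set.ncard_sdiff_singleton_of_mem hw).le hne with
    ⟨p, hp, ⟨x, hx, ht⟩, havoid⟩ | ⟨p, hp, ⟨x, hx, ht⟩, havoid⟩
  · have := one_lt_ncard_of_mem_CSP_of_avoid hp hx.1 ht havoid
    omega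
  · have := one_lt_ncard_of_mem_CSP_of_avoid hp hx.1 ht havoid
    omega

theorem Identifiable.adj_of_ncard_lt_two [Finite V]
    (hid : Identifiable (CSP G M) Mᶜ (Mᶜ.ncard - 1)) {u v : V} (hv : v ∉ M) (hu : u ∉ M)
    (huv : u ≠ v) (hlt : {m ∈ M | G.Adj v m}.ncard < 2) :
    G.Adj v u ∧ ∃ m ∈ M, G.Adj v m := by
  have hcard : (Mᶜ \ {u}).ncard = Mᶜ.ncard - 1 := Set.ncard_sdiff_singleton_of_mem hu
  have hsub : Mᶜ \ {v, u} ⊆ Mᶜ \ {u} := Set.sdiff_subset_sdiff_right (by simp)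
  have hne : Mᶜ \ {v, u} ≠ Mᶜ \ {u} := fun h =>
    (h ▸ (⟨hv, huv.symm⟩ : v ∈ Mᶜ \ {u}) : v ∈ Mᶜ \ {v, u}).2 (by simp)
  rcases hid _ _ Set.sdiff_subset Set.sdiff_subset (hcard ▸ Set.ncard_le_ncard hsub) hcard.le hne with
    ⟨p, -, ⟨x, hx, ht⟩, havoid⟩ | ⟨p, hp, ⟨x, hx, ht⟩, havoid⟩
  · exact absurd ht (havoid x (hsub hx))
  · obtain rfl : x = v := by_contra fun h => havoid x ⟨hx.1, by simp_all⟩ ht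
    exact adj_of_mem_CSP_of_avoid hp hv ht havoid hlt

theorem Identifiable.ncard_eq_one_and_adj [Finite V]
    (hid : Identifiable (CSP G M) Mᶜ (Mᶜ.ncard - 1)) (hG : G.Connected) (hM : M.Nonempty)
    {v : V} (hv : v ∉ M) (hlt : {m ∈ M | G.Adj v m}.ncard < 2) :
    {m ∈ M | G.Adj v m}.ncard = 1 ∧ ∀ u ∈ Mᶜ, u ≠ v → G.Adj v u := by
  obtain ⟨m, hm, hvm⟩ : ∃ m ∈ M, G.Adj v m := by
    by_cases h : ∃ u ∉ M, u ≠ v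
    · obtain ⟨u, hu, huv⟩ := h
      exact (hid.adj_of_ncard_lt_two hv hu huv hlt).2
    · push Not at h
      exact exists_adj_mem_of_connected hG hM hv h
  have : 0 < {m ∈ M | G.Adj v m}.ncard := (Set.ncard_pos (Set.toFinite _)).mpr ⟨m, hm, hvm⟩
  exact ⟨by omega, fun u hu huv => (hid.adj_of_ncard_lt_two hv hu huv hlt).1⟩

theorem identifiable_CSP_of_ncard_lt_two [Finite V]
    (h₁ : ∀ u ∈ Mᶜ, ∀ w ∈ Mᶜ, {m ∈ M | G.Adj u m}.ncard < 2 →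
      {m ∈ M | G.Adj w m}.ncard < 2 → u = w)
    (h₂ : ∀ v ∈ Mᶜ, {m ∈ M | G.Adj v m}.ncard < 2 →
      {m ∈ M | G.Adj v m}.ncard = 1 ∧ ∀ u ∈ Mᶜ, u ≠ v → G.Adj v u) :
    Identifiable (CSP G M) Mᶜ (Mᶜ.ncard - 1) := by
  intro F F' hF hF' hcF hcF' hne
  obtain ⟨z, hz⟩ := Set.symmDiff_nonempty.mpr hne
  wlog hzF : z ∈ F ∧ z ∉ F' generalizing F F'
  · exact (this F' F hF' hF hcF' hcF hne.symm (symmDiff_comm F F' ▸ hz)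
      ((Set.mem_symmDiff.mp hz).resolve_left hzF)).symm
  by_cases hz2 : 1 < {m ∈ M | G.Adj z m}.ncard
  · exact distinguishable_CSP_of_one_lt_ncard hF' hzF.1 hzF.2 hz2
  by_cases hx : ∃ x ∈ F', x ∉ F ∧ 1 < {m ∈ M | G.Adj x m}.ncard
  · obtain ⟨x, hxF', hxF, hx2⟩ := hx
    exact (distinguishable_CSP_of_one_lt_ncard hF hxF' hxF hx2).symm
  push Not at hx
  have hothers : ∀ u ∈ Mᶜ, u ≠ z → 1 < {m ∈ M | G.Adj u m}.ncard := fun u hu huz =>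
    by_contra fun h => huz (h₁ u hu z (hF hzF.1) (by omega) (by omega))
  have hF'F : F' ⊆ F := fun x hxF' => by_contra fun hxF =>
    (hothers x (hF' hxF') fun h => hzF.2 (h ▸ hxF')).not_ge (hx x hxF' hxF)
  obtain ⟨hz1, hzadj⟩ := h₂ z (hF hzF.1) (by omega)
  exact distinguishable_CSP_of_subset hF hcF hF'F hzF.1 hzF.2 hz1 hzadj hothers

end CSP

theorem stmt_10_general {V : Type*} [Fintype V] (G : SimpleGraph V) (hG : G.Connected)
    (M : Set V) (hM : M.Nonempty) :
    Identifiable (CSP G M) Mᶜ (Mᶜ.ncard - 1) ↔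
      ((∀ u ∈ Mᶜ, ∀ w ∈ Mᶜ, { m ∈ M | G.Adj u m }.ncard < 2 →
          { m ∈ M | G.Adj w m }.ncard < 2 → u = w) ∧
        ∀ v ∈ Mᶜ, { m ∈ M | G.Adj v m }.ncard < 2 →
          { m ∈ M | G.Adj v m }.ncard = 1 ∧ ∀ u ∈ Mᶜ, u ≠ v → G.Adj v u) :=
  ⟨fun hid => ⟨fun _ hu _ hw => hid.eq_of_ncard_lt_two hu hw,
      fun _ hv => hid.ncard_eq_one_and_adj hG hM hv⟩,
    fun ⟨h₁, h₂⟩ => identifiable_CSP_of_ncard_lt_two h₁ h₂⟩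

/-- For `σ ≥ 1`: `G` is `(σ−1)`-identifiable under CSP iff at most one
non-monitor has fewer than two monitor neighbors, and if such a non-monitor `v`
exists, then `v` has exactly one monitor neighbor and is adjacent to every
other non-monitor. -/
theorem stmt_10 {V : Type*} [Fintype V] (G : SimpleGraph V) (hG : G.Connected)
    (M : Set V) (hM : M.Nonempty) (hσ : 1 ≤ Mᶜ.ncard) :
    Identifiable (CSP G M) Mᶜ (Mᶜ.ncard - 1) ↔
      ((∀ u ∈ Mᶜ, ∀ w ∈ Mᶜ, { m ∈ M | G.Adj u m }.ncard < 2 →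
          { m ∈ M | G.Adj w m }.ncard < 2 → u = w) ∧
        ∀ v ∈ Mᶜ, { m ∈ M | G.Adj v m }.ncard < 2 →
          { m ∈ M | G.Adj v m }.ncard = 1 ∧ ∀ u ∈ Mᶜ, u ≠ v → G.Adj v u) :=
  stmt_10_general G hG M hM
end

section
/- Let k be an integer with k ≤ σ − 1. If the auxiliary graph G* is (k+1)-vertex-connected, then G is k-identifiable under CAP. -/
open SimpleGraph

/-!
Let `F` be a failure set with `|F| ≤ k` and `v ∉ F` a non-monitor. Removing `F` from `G*` leaves
it connected, so some walk of `G*` avoiding `F` joins `v` to the virtual monitor `m'`. Following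
it from `v` in `G`, every edge between non-monitors is either an edge of `G` or starts at a node
adjacent to a monitor, as is every edge into `m'`; hence `G` has a walk from `v` to a monitor `m`
avoiding `F`, and going there and back is a CAP walk that separates any failure set containing `v`
from `F`.
-/

theorem Set.ncard_image_some_preimage_val_le {V : Type*} {Nm F : Set V} (hF : F.Finite) :
    (some '' (Subtype.val ⁻¹' F) : Set (Option Nm)).ncard ≤ F.ncard := by
  rw [Set.ncard_image_of_injective _ (Option.some_injective _)]
  exact Set.ncard_le_ncard_of_injOn Subtype.val (fun _ hu => hu) Subtype.val_injective.injOn hF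

section Identifiability

variable {V : Type*} {G : SimpleGraph V}

theorem identifiable_of_exists_traverses_avoiding {P : Set (MWalk G)} {Nm : Set V} {k : ℕ}
    (h : ∀ F ⊆ Nm, F.ncard ≤ k → ∀ v ∈ Nm, v ∉ F →
      ∃ p ∈ P, Traverses p v ∧ ∀ x ∈ F, ¬ Traverses p x) :
    Identifiable P Nm k := by
  intro F F' hF hF' hFk hF'k hne
  by_cases hsub : F ⊆ F'
  · obtain ⟨v, hvF', hvF⟩ := Set.not_subset.mp fun h' => hne (hsub.antisymm h')
    obtain ⟨p, hp, hpv, hpF⟩ := h F hF hFk v (hF' hvF') hvF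
    exact .inr ⟨p, hp, ⟨v, hvF', hpv⟩, hpF⟩
  · obtain ⟨v, hvF, hvF'⟩ := Set.not_subset.mp hsub
    obtain ⟨p, hp, hpv, hpF'⟩ := h F' hF' hF'k v (hF hvF) hvF'
    exact .inl ⟨p, hp, ⟨v, hvF, hpv⟩, hpF'⟩

end Identifiability

section ReachesAvoiding

variable {V : Type*} (G : SimpleGraph V) (F M : Set V)

def ReachesAvoiding (u : V) : Prop :=
  ∃ m ∈ M, ∃ q : G.Walk u m, ∀ z ∈ q.support, z ∉ F

variable {G F M}

theorem ReachesAvoiding.of_adj {u m : V} (hu : u ∉ F) (hm : m ∈ M) (hmF : m ∉ F)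
    (h : G.Adj u m) : ReachesAvoiding G F M u :=
  ⟨m, hm, .cons h .nil, by simp [hu, hmF]⟩

theorem ReachesAvoiding.cons {u w : V} (hu : u ∉ F) (h : G.Adj u w)
    (hw : ReachesAvoiding G F M w) : ReachesAvoiding G F M u := by
  obtain ⟨m, hm, q, hq⟩ := hw
  exact ⟨m, hm, .cons h q, by simpa [hu] using hq⟩

theorem ReachesAvoiding.exists_cap {u : V} (hu : ReachesAvoiding G F M u) :
    ∃ p ∈ CAP G M, Traverses p u ∧ ∀ x ∈ F, ¬ Traverses p x := by
  obtain ⟨m, hm, q, hq⟩ := hu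
  refine ⟨⟨m, m, q.reverse.append q⟩, ⟨hm, hm⟩, ?_, fun x hxF hx => ?_⟩
  · simp [Traverses, Walk.mem_support_append_iff]
  · simp only [Traverses, Walk.mem_support_append_iff, Walk.support_reverse, List.mem_reverse,
      or_self] at hx
    exact hq x hx hxF

end ReachesAvoiding

namespace StarGraph

variable {V : Type*} {G : SimpleGraph V} {Nm F M : Set V}

theorem reachesAvoiding_of_adj (hFM : Disjoint F M) {u : Nm} (hu : (u : V) ∉ F)
    {y : Option Nm} (h : (StarGraph G Nm M).Adj (some u) y)
    (hy : y.elim True fun w => ReachesAvoiding G F M w) : ReachesAvoiding G F M u := by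
  rcases y with _ | w
  · obtain ⟨m, hm, hum⟩ := h
    exact .of_adj hu hm (hFM.notMem_of_mem_right hm) hum
  · obtain ⟨-, hGuw | ⟨⟨m, hm, hum⟩, -⟩⟩ := h
    · exact .cons hu hGuw hy
    · exact .of_adj hu hm (hFM.notMem_of_mem_right hm) hum

theorem reachesAvoiding_of_reachable (hFM : Disjoint F M)
    {x y : ↥(some '' (Subtype.val ⁻¹' F) : Set (Option Nm))ᶜ}
    (hxy : ((StarGraph G Nm M).induce _).Reachable x y) (hy : y.1 = none) :
    x.1.elim True fun u => ReachesAvoiding G F M u := by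
  obtain ⟨w⟩ := hxy
  induction w with
  | nil => simp [hy]
  | @cons a _ _ h _ ih =>
    rcases a with ⟨_ | u, hu⟩
    · trivial
    · exact reachesAvoiding_of_adj hFM (fun huF => hu ⟨u, huF, rfl⟩) h (ih hy)

theorem reachesAvoiding_of_kConnected {k : ℕ} (h : KConnected (StarGraph G Nm M) (k + 1))
    (hFNm : F ⊆ Nm) (hFM : Disjoint F M) (hFk : F.ncard ≤ k) {v : V} (hv : v ∈ Nm)
    (hvF : v ∉ F) : ReachesAvoiding G F M v := by
  -- `KConnected` forces `G*` to be finite, so `ncard` below counts honestly.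
  have : Finite (Option Nm) := Nat.finite_of_card_ne_zero (Nat.zero_lt_of_lt h.1).ne'
  have : Finite Nm := .of_injective some (Option.some_injective _)
  have hS : (some '' (Subtype.val ⁻¹' F) : Set (Option Nm)).ncard < k + 1 :=
    (Set.ncard_image_some_preimage_val_le ((Set.toFinite Nm).subset hFNm)).trans_lt
      (Nat.lt_succ_of_le hFk)
  obtain ⟨w⟩ := (h.2 _ hS).preconnected
    ⟨some ⟨v, hv⟩, by rintro ⟨_, huF, ⟨⟩⟩; exact hvF huF⟩
    ⟨none, fun ⟨_, _, hu⟩ => Option.some_ne_none _ hu⟩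
  exact reachesAvoiding_of_reachable hFM ⟨w⟩ rfl

end StarGraph

theorem stmt_13_general {V : Type*} (G : SimpleGraph V)
    (M : Set V) (k : ℕ)
    (h : KConnected (StarGraph G Mᶜ M) (k + 1)) :
    Identifiable (CAP G M) Mᶜ k :=
  identifiable_of_exists_traverses_avoiding fun _F hF hFk _v hv hvF =>
    (StarGraph.reachesAvoiding_of_kConnected h hF (Set.subset_compl_iff_disjoint_right.mp hF)
      hFk hv hvF).exists_cap

/-- If `k ≤ σ − 1` and the auxiliary graph `G*` is `(k+1)`-vertex-connected,
then `G` is `k`-identifiable under CAP. -/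
theorem stmt_13 {V : Type*} [Fintype V] (G : SimpleGraph V) (hG : G.Connected)
    (M : Set V) (hM : M.Nonempty) (k : ℕ) (hk : k + 1 ≤ Mᶜ.ncard)
    (h : KConnected (StarGraph G Mᶜ M) (k + 1)) :
    Identifiable (CAP G M) Mᶜ k :=
  stmt_13_general G M k h
end

section
/- Let k be an integer with 1 ≤ k ≤ σ. If G is k-identifiable under CAP, then the auxiliary graph G* is k-vertex-connected. -/
open SimpleGraph

/-
The virtual monitor and the non-monitors adjacent to monitors form a clique of `G*`. So if removing
a set `S` of fewer than `k` vertices disconnected `G*`, some remaining vertex `v` would be cut off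
from that clique; then every monitor-to-monitor walk of `G` through `v` leaves `v`'s component
through a non-monitor of `S`, and the failure sets `T` and `T ∪ {v}`, where `T` is the set of
non-monitors in `S`, would be indistinguishable although both have size at most `k`.
-/

section

variable {V : Type*} {G : SimpleGraph V}

theorem SimpleGraph.preconnected_of_forall_reachable_from {W : Type*} {H : SimpleGraph W}
    (Q : Set W) (hQ : ∀ x ∈ Q, ∀ y ∈ Q, H.Reachable x y)
    (h : ∀ x, ∃ q ∈ Q, H.Reachable q x) :
    H.Preconnected := by
  intro x y
  obtain ⟨p, hp, hpx⟩ := h x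
  obtain ⟨q, hq, hqy⟩ := h y
  exact hpx.symm.trans ((hQ p hp q hq).trans hqy)

theorem SimpleGraph.Walk.exists_mem_support_of_adj_closed {K T : Set V}
    (hK : ∀ x y, G.Adj x y → x ∈ K → y ∉ T → y ∈ K) {u v : V} (w : G.Walk u v)
    (hu : u ∈ K) (hv : v ∉ K) : ∃ x ∈ w.support, x ∈ T := by
  obtain ⟨d, hd, hfst, hsnd⟩ := w.exists_boundary_dart K hu hv
  by_contra! hT
  exact hsnd (hK _ _ d.adj hfst (hT _ (w.dart_snd_mem_support_of_mem_darts hd)))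

theorem Set.natCard_option_coe (Nm : Set V) [Finite ↥Nm] :
    Nat.card (Option ↥Nm) = Nm.ncard + 1 := by
  rw [Finite.card_option, Nat.card_coe_set_eq]

theorem ncard_image_val_preimage_some_le {Nm : Set V} {S : Set (Option ↥Nm)} (hS : S.Finite) :
    (Subtype.val '' (some ⁻¹' S)).ncard ≤ S.ncard := by
  rw [Set.ncard_image_of_injective _ Subtype.val_injective]
  exact Set.ncard_le_ncard_of_injOn some (fun _ h => h) (Option.some_injective _).injOn hS

theorem Identifiable.exists_traverses_not_traverses {P : Set (MWalk G)} {Nm T : Set V} {k : ℕ}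
    (hid : Identifiable P Nm k) {v : V} (hv : v ∈ Nm) (hT : T ⊆ Nm) (hvT : v ∉ T)
    (hTk : T.ncard < k) : ∃ p ∈ P, Traverses p v ∧ ∀ x ∈ T, ¬ Traverses p x := by
  have hne : insert v T ≠ T := fun h => hvT (h ▸ Set.mem_insert v T)
  rcases hid (insert v T) T (Set.insert_subset hv hT) hT
      ((Set.ncard_insert_le v T).trans hTk) hTk.le hne with
    ⟨p, hp, ⟨x, hx, hpx⟩, hpT⟩ | ⟨p, _, ⟨x, hx, hpx⟩, hpvT⟩
  · rcases Set.mem_insert_iff.mp hx with rfl | hxT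
    · exact ⟨p, hp, hpx, hpT⟩
    · exact absurd hpx (hpT x hxT)
  · exact absurd hpx (hpvT x (Set.mem_insert_of_mem v hx))

namespace StarGraph

/-- The virtual monitor `none` together with the non-monitors adjacent to a monitor of `M'`;
these vertices are pairwise adjacent in `StarGraph G Nm M'`. -/
def hub (G : SimpleGraph V) (Nm M' : Set V) : Set (Option ↥Nm) :=
  {x | ∀ u : ↥Nm, x = some u → ∃ m ∈ M', G.Adj u m}

variable {Nm M' : Set V}

theorem adj_of_mem_hub {x y : Option ↥Nm} (hx : x ∈ hub G Nm M') (hy : y ∈ hub G Nm M')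
    (hxy : x ≠ y) : (StarGraph G Nm M').Adj x y := by
  rcases x with _ | u <;> rcases y with _ | w
  · exact absurd rfl hxy
  · exact hy w rfl
  · exact hx u rfl
  · exact ⟨fun h => hxy (congrArg some (Subtype.ext h)), Or.inr ⟨hx u rfl, hy w rfl⟩⟩

theorem induce_reachable_of_mem_hub {S : Set (Option ↥Nm)} {x y : ↥Sᶜ}
    (hx : x.val ∈ hub G Nm M') (hy : y.val ∈ hub G Nm M') :
    ((StarGraph G Nm M').induce Sᶜ).Reachable x y := by
  by_cases hxy : x = y
  · exact hxy ▸ .rfl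
  · exact Adj.reachable (adj_of_mem_hub hx hy (fun h => hxy (Subtype.ext h)))

theorem exists_mem_support_of_not_reachable_from_hub {M : Set V}
    {S : Set (Option ↥Mᶜ)} {c : ↥Sᶜ} {v : ↥Mᶜ} (hcv : c.val = some v)
    (hc : ∀ q : ↥Sᶜ, q.val ∈ hub G Mᶜ M →
      ¬ ((StarGraph G Mᶜ M).induce Sᶜ).Reachable q c)
    {m : V} (hm : m ∈ M) (w : G.Walk v m) :
    ∃ x ∈ w.support, x ∈ Subtype.val '' (some ⁻¹' S) := by
  let K : Set V := {u | ∃ x : ↥Sᶜ, ∃ y : ↥Mᶜ, x.val = some y ∧ y.val = u ∧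
    ((StarGraph G Mᶜ M).induce Sᶜ).Reachable x c}
  refine w.exists_mem_support_of_adj_closed (K := K) ?_ ⟨c, v, hcv, rfl, .rfl⟩
    fun ⟨_, y, _, hy, _⟩ => y.2 (hy ▸ hm)
  rintro _ z hadj ⟨x, y, hxy, rfl, hxc⟩ hzS
  by_cases hzM : z ∈ M
  · refine absurd hxc (hc x ?_)
    rintro u hu
    exact ⟨z, hzM, Option.some_injective _ (hxy.symm.trans hu) ▸ hadj⟩
  · have hzS' : some ⟨z, hzM⟩ ∈ Sᶜ := fun h => hzS ⟨⟨z, hzM⟩, h, rfl⟩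
    have hxz : ((StarGraph G Mᶜ M).induce Sᶜ).Adj x ⟨_, hzS'⟩ := by
      change (StarGraph G Mᶜ M).Adj x.val _
      rw [hxy]
      exact ⟨hadj.ne, Or.inl hadj⟩
    exact ⟨⟨_, hzS'⟩, ⟨z, hzM⟩, rfl, rfl, hxz.symm.reachable.trans hxc⟩

end StarGraph

end

theorem stmt_14_general {V : Type*} [Fintype V] (G : SimpleGraph V)
    (M : Set V) (k : ℕ) (hk : k ≤ Mᶜ.ncard)
    (hid : Identifiable (CAP G M) Mᶜ k) :
    KConnected (StarGraph G Mᶜ M) k := by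
  classical
  refine ⟨by rw [Set.natCard_option_coe]; omega, fun S hS => ?_⟩
  have hne : Nonempty ↥Sᶜ := by
    refine Set.Nonempty.to_subtype (Set.nonempty_compl.mpr fun h => ?_)
    rw [h, Set.ncard_univ, Set.natCard_option_coe] at hS
    omega
  have hreach : ∀ c : ↥Sᶜ, ∃ q ∈ {q : ↥Sᶜ | q.val ∈ StarGraph.hub G Mᶜ M},
      ((StarGraph G Mᶜ M).induce Sᶜ).Reachable q c := by
    intro c
    by_contra! hc
    obtain ⟨v, hcv⟩ : ∃ v, c.val = some v := Option.ne_none_iff_exists'.mp fun h =>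
      hc c (fun _ hu => absurd (h.symm.trans hu) (Option.some_ne_none _).symm) .rfl
    have hvS : (v : V) ∉ Subtype.val '' (some ⁻¹' S) := by
      rintro ⟨u, hu, huv⟩
      exact c.2 (hcv ▸ Subtype.ext huv ▸ hu)
    obtain ⟨p, hp, hpv, hpS⟩ := hid.exists_traverses_not_traverses v.2
      (Set.image_subset_iff.mpr fun u _ => u.2) hvS
      ((ncard_image_val_preimage_some_le S.toFinite).trans_lt hS)
    obtain ⟨x, hx, hxS⟩ := StarGraph.exists_mem_support_of_not_reachable_from_hub hcv hc hp.2
      (p.2.2.dropUntil v hpv)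
    exact hpS x hxS (p.2.2.support_dropUntil_subset_support hpv hx)
  exact (connected_iff _).mpr ⟨preconnected_of_forall_reachable_from _
    (fun _ hx _ hy => StarGraph.induce_reachable_of_mem_hub hx hy) hreach, hne⟩

/-- If `1 ≤ k ≤ σ` and `G` is `k`-identifiable under CAP, then the auxiliary
graph `G*` is `k`-vertex-connected. -/
theorem stmt_14 {V : Type*} [Fintype V] (G : SimpleGraph V) (hG : G.Connected)
    (M : Set V) (hM : M.Nonempty) (k : ℕ) (hk1 : 1 ≤ k) (hk : k ≤ Mᶜ.ncard)
    (hid : Identifiable (CAP G M) Mᶜ k) :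
    KConnected (StarGraph G Mᶜ M) k :=
  stmt_14_general G M k hk hid
end

section
/- If δ(G*) ≤ σ − 1, then the maximum identifiability of G under CAP satisfies δ(G*) − 1 ≤ Ω_CAP(G) ≤ δ(G*). -/
/-!
Both bounds rest on one translation. A CAP walk avoiding a set `T` of non-monitors visits a
non-monitor `u` iff `u` is reachable from a monitor in `G − T`; contracting the monitors
into `m'`, this holds iff `u` is joined in `G* − T` to `m'` or to a monitor neighbour, and
the monitor neighbours form a clique together with `m'`.

If `G*` is `(k+1)`-connected and `|F'| ≤ k`, every `v ∉ F'` is joined to `m'` in `G* − F'`, so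
the round trip from a monitor to `v` separates any `F ∋ v` from `F'`: the network is
`k`-identifiable. Conversely, if it is `k`-identifiable and `|S| < k`, a walk distinguishing
`S` from `S ∪ {u}` reaches `u` avoiding `S`, hence every non-monitor of `G* − S` reaches a
monitor neighbour and `G* − S` is connected: `G*` is `k`-connected.
-/

open SimpleGraph

section ReachableAvoiding

variable {V : Type*} {G : SimpleGraph V} {M T : Set V} {u v : V}

def ReachableAvoiding (G : SimpleGraph V) (M T : Set V) (u : V) : Prop :=
  ∃ m ∈ M, ∃ w : G.Walk m u, ∀ y ∈ w.support, y ∉ T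

lemma ReachableAvoiding.step (h : ReachableAvoiding G M T u) (hadj : G.Adj u v) (hv : v ∉ T) :
    ReachableAvoiding G M T v := by
  obtain ⟨m, hm, w, hw⟩ := h
  refine ⟨m, hm, w.concat hadj, fun y hy => ?_⟩
  rw [Walk.support_concat, List.mem_append, List.mem_singleton] at hy
  rcases hy with hy | rfl
  exacts [hw y hy, hv]

lemma reachableAvoiding_of_adj_mem {m : V} (hm : m ∈ M) (hmT : m ∉ T) (hadj : G.Adj m u)
    (hu : u ∉ T) : ReachableAvoiding G M T u :=
  ReachableAvoiding.step ⟨m, hm, .nil, by simpa using hmT⟩ hadj hu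

lemma ReachableAvoiding.exists_cap_separating {F F' : Set V} (h : ReachableAvoiding G M F' v)
    (hv : v ∈ F) :
    ∃ p ∈ CAP G M, (∃ x ∈ F, Traverses p x) ∧ ∀ x ∈ F', ¬ Traverses p x := by
  obtain ⟨m, hm, w, hw⟩ := h
  refine ⟨⟨m, m, w.append w.reverse⟩, ⟨hm, hm⟩, ⟨v, hv, ?_⟩, fun x hx hxw => ?_⟩
  · exact (Walk.mem_support_append_iff _ _).mpr (Or.inl w.end_mem_support)
  · rcases (Walk.mem_support_append_iff _ _).mp hxw with hxw | hxw
    · exact hw x hxw hx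
    · exact hw x (by simpa using hxw) hx

/-- A CAP walk distinguishing `T` from `insert u T` must visit `u` while avoiding `T`;
its prefix up to `u` is the required walk. -/
lemma reachableAvoiding_of_identifiable {Nm : Set V} {k : ℕ}
    (hid : Identifiable (CAP G M) Nm k) (hT : T ⊆ Nm) (hTk : T.ncard < k) (hu : u ∈ Nm)
    (huT : u ∉ T) : ReachableAvoiding G M T u := by
  classical
  have hne : T ≠ insert u T := fun h => huT (h ▸ Set.mem_insert u T)
  rcases hid T (insert u T) hT (Set.insert_subset hu hT) hTk.le
      ((Set.ncard_insert_le u T).trans hTk) hne with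
    ⟨p, -, ⟨x, hxT, hxp⟩, hp⟩ | ⟨p, hp, ⟨x, hx, hxp⟩, hpT⟩
  · exact absurd hxp (hp x (Set.mem_insert_of_mem u hxT))
  · obtain rfl | hxT := hx
    · exact ⟨p.1, hp.1, p.2.2.takeUntil x hxp,
        fun y hy hyT => hpT y hyT (p.2.2.support_takeUntil_subset_support hxp hy)⟩
    · exact absurd hxp (hpT x hxT)

end ReachableAvoiding

lemma natCard_option_set {V : Type*} (s : Set V) [Finite s] :
    Nat.card (Option s) = s.ncard + 1 := by
  rw [Finite.card_option, Nat.card_coe_set_eq]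

section KConnected

variable {W : Type*} {H : SimpleGraph W} {k : ℕ}

lemma kConnected_vertexConnectivity [Finite W] [Nonempty W] (H : SimpleGraph W) :
    KConnected H (vertexConnectivity H) :=
  Nat.sSup_mem
    ⟨0, show KConnected H 0 from ⟨Nat.card_pos, fun _ hS => absurd hS (Nat.not_lt_zero _)⟩⟩
    ⟨Nat.card W, fun _ (hk : KConnected H _) => hk.1.le⟩

lemma KConnected.le_vertexConnectivity (h : KConnected H k) : k ≤ vertexConnectivity H :=
  le_csSup ⟨Nat.card W, fun _ (hk : KConnected H _) => hk.1.le⟩ h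

lemma KConnected.le_ncard {V : Type*} {s : Set V} [Finite s] {H : SimpleGraph (Option s)}
    (h : KConnected H k) : k ≤ s.ncard := by
  have := h.1
  rw [natCard_option_set] at this
  omega

end KConnected

section MaxIdent

variable {V : Type*} {G : SimpleGraph V} {P : Set (MWalk G)} {Nm : Set V} {k d : ℕ}

lemma le_maxIdent (hk : k ≤ Nm.ncard) (h : Identifiable P Nm k) : k ≤ maxIdent P Nm :=
  le_csSup ⟨Nm.ncard, fun _ (h : _ ∧ _) => h.1⟩ ⟨hk, h⟩

lemma maxIdent_le (h : ∀ k ≤ Nm.ncard, Identifiable P Nm k → k ≤ d) : maxIdent P Nm ≤ d :=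
  csSup_le' fun k hk => h k hk.1 hk.2

end MaxIdent

section StarGraph

variable {V : Type*} {G : SimpleGraph V} {M : Set V} {S : Set (Option ↥Mᶜ)}

lemma reachableAvoiding_of_walk_to_none {T : Set V} (hTM : T ⊆ Mᶜ)
    (hTS : ∀ u : ↥Mᶜ, (u : V) ∈ T → some u ∈ S) {a c : ↥Sᶜ}
    (p : ((StarGraph G Mᶜ M).induce Sᶜ).Walk a c) (hc : c.val = none) :
    ∀ u : ↥Mᶜ, a.val = some u → ReachableAvoiding G M T u := by
  induction p with
  | nil => exact fun u hu => absurd (hu.symm.trans hc) (Option.some_ne_none u)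
  | @cons a b c hab q ih =>
    intro u hau
    have huT : (u : V) ∉ T := fun hu => a.2 (hau ▸ hTS u hu)
    have hadj : (StarGraph G Mᶜ M).Adj (some u) b.val := hau ▸ hab
    rcases hb : b.val with _ | u'
    · rw [hb] at hadj
      obtain ⟨m, hm, hum⟩ := hadj
      exact reachableAvoiding_of_adj_mem hm (fun hmT => hTM hmT hm) hum.symm huT
    · rw [hb] at hadj
      rcases hadj.2 with huu' | ⟨⟨m, hm, hum⟩, -⟩
      · exact (ih hc u' hb).step huu'.symm huT
      · exact reachableAvoiding_of_adj_mem hm (fun hmT => hTM hmT hm) hum.symm huT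

lemma exists_reachable_monitor_adj_of_walk {T : Set V}
    (hST : ∀ u : ↥Mᶜ, some u ∈ S → (u : V) ∈ T) {x m : V} (w : G.Walk x m) (hm : m ∈ M)
    (hw : ∀ y ∈ w.support, y ∉ T) (hx : x ∈ Mᶜ) (hxS : some ⟨x, hx⟩ ∈ Sᶜ) :
    ∃ z : ↥Mᶜ, ∃ hz : some z ∈ Sᶜ, (∃ m ∈ M, G.Adj z m) ∧
      ((StarGraph G Mᶜ M).induce Sᶜ).Reachable ⟨some ⟨x, hx⟩, hxS⟩ ⟨some z, hz⟩ := by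
  induction w with
  | nil => exact absurd hm hx
  | @cons x y m hxy q ih =>
    by_cases hy : y ∈ M
    · exact ⟨⟨x, hx⟩, hxS, ⟨y, hy, hxy⟩, .refl _⟩
    have hyS : some ⟨y, hy⟩ ∈ Sᶜ := fun h' => hw y (by simp) (hST _ h')
    obtain ⟨z, hz, hzM, hreach⟩ := ih hm (fun y' hy' => hw y' (by simp [hy'])) hy hyS
    have hadj : ((StarGraph G Mᶜ M).induce Sᶜ).Adj ⟨some ⟨x, hx⟩, hxS⟩ ⟨some ⟨y, hy⟩, hyS⟩ :=
      ⟨hxy.ne, Or.inl hxy⟩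
    exact ⟨z, hz, hzM, hadj.reachable.trans hreach⟩

/-- The monitor neighbours outside `S` form a clique joined to the virtual monitor. -/
lemma connected_induce_starGraph (hne : Sᶜ.Nonempty)
    (h : ∀ (u : ↥Mᶜ) (hu : some u ∈ Sᶜ), ∃ z : ↥Mᶜ, ∃ hz : some z ∈ Sᶜ,
      (∃ m ∈ M, G.Adj z m) ∧
        ((StarGraph G Mᶜ M).induce Sᶜ).Reachable ⟨some u, hu⟩ ⟨some z, hz⟩) :
    ((StarGraph G Mᶜ M).induce Sᶜ).Connected := by
  have : Nonempty ↥Sᶜ := hne.to_subtype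
  have to_none (u : ↥Mᶜ) (hu : some u ∈ Sᶜ) (hn : none ∈ Sᶜ) :
      ((StarGraph G Mᶜ M).induce Sᶜ).Reachable ⟨some u, hu⟩ ⟨none, hn⟩ := by
    obtain ⟨z, hz, hzM, huz⟩ := h u hu
    exact huz.trans (Adj.reachable (G := (StarGraph G Mᶜ M).induce Sᶜ) (v := ⟨none, hn⟩) hzM)
  refine ⟨?_⟩
  rintro ⟨_ | u, hu⟩ ⟨_ | w, hw⟩
  · exact .refl _
  · exact (to_none w hw hu).symm
  · exact to_none u hu hw
  · obtain ⟨z, hz, hzM, huz⟩ := h u hu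
    obtain ⟨z', hz', hz'M, hwz'⟩ := h w hw
    refine huz.trans (Reachable.trans ?_ hwz'.symm)
    by_cases hzz' : z = z'
    · subst hzz'
      exact .refl _
    · exact Adj.reachable (G := (StarGraph G Mᶜ M).induce Sᶜ) (v := ⟨some z', hz'⟩)
        ⟨fun h' => hzz' (Subtype.ext h'), Or.inr ⟨hzM, hz'M⟩⟩

theorem kConnected_starGraph_of_identifiable [Finite V] {k : ℕ}
    (hid : Identifiable (CAP G M) Mᶜ k) (hk : k ≤ Mᶜ.ncard) :
    KConnected (StarGraph G Mᶜ M) k := by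
  refine ⟨by rw [natCard_option_set]; omega, fun S hS => ?_⟩
  set T : Set V := Subtype.val '' (some ⁻¹' S)
  have hTk : T.ncard < k :=
    calc T.ncard ≤ (some ⁻¹' S).ncard := Set.ncard_image_le
      _ ≤ S.ncard :=
        Set.ncard_le_ncard_of_injOn some (fun _ h => h) (Option.some_injective _).injOn
      _ < k := hS
  refine connected_induce_starGraph (Set.nonempty_compl.mpr fun hS' => ?_) fun u hu => ?_
  · rw [hS', Set.ncard_univ, natCard_option_set] at hS
    omega
  · obtain ⟨m, hm, w, hw⟩ := reachableAvoiding_of_identifiable hid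
      (Set.image_subset_iff.mpr fun x _ => x.2) hTk u.2
      (by rintro ⟨u', hu', he⟩; exact hu (Subtype.ext he ▸ hu'))
    exact exists_reachable_monitor_adj_of_walk (fun _ hu => Set.mem_image_of_mem _ hu)
      w.reverse hm (fun y hy => hw y (by simpa using hy)) u.2 hu

lemma exists_cap_separating_of_kConnected [Finite V] {k : ℕ}
    (h : KConnected (StarGraph G Mᶜ M) (k + 1)) {F F' : Set V} (hF' : F' ⊆ Mᶜ)
    (hF'k : F'.ncard ≤ k) {v : V} (hvF : v ∈ F) (hv : v ∈ Mᶜ) (hvF' : v ∉ F') :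
    ∃ p ∈ CAP G M, (∃ x ∈ F, Traverses p x) ∧ ∀ x ∈ F', ¬ Traverses p x := by
  set S : Set (Option ↥Mᶜ) := some '' (Subtype.val ⁻¹' F')
  have hSk : S.ncard < k + 1 :=
    calc S.ncard ≤ (Subtype.val ⁻¹' F' : Set ↥Mᶜ).ncard := Set.ncard_image_le
      _ ≤ F'.ncard := Set.ncard_le_ncard_of_injOn Subtype.val (fun _ h => h)
          Subtype.val_injective.injOn
      _ < k + 1 := Nat.lt_succ_of_le hF'k
  have hvS : some ⟨v, hv⟩ ∈ Sᶜ := by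
    rintro ⟨_, hu, he⟩
    obtain rfl := Option.some_injective _ he
    exact hvF' hu
  have hnone : (none : Option ↥Mᶜ) ∈ Sᶜ := by
    rintro ⟨_, -, he⟩
    exact Option.some_ne_none _ he
  obtain ⟨p⟩ := (h.2 S hSk).preconnected ⟨_, hvS⟩ ⟨_, hnone⟩
  exact (reachableAvoiding_of_walk_to_none hF' (fun _ hu => Set.mem_image_of_mem some hu) p rfl
    ⟨v, hv⟩ rfl).exists_cap_separating hvF

theorem identifiable_of_kConnected [Finite V] {k : ℕ}
    (h : KConnected (StarGraph G Mᶜ M) (k + 1)) : Identifiable (CAP G M) Mᶜ k := by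
  intro F F' hF hF' hFk hF'k hne
  by_cases hFF' : F ⊆ F'
  · obtain ⟨v, hvF', hvF⟩ := Set.not_subset.mp fun h' => hne (hFF'.antisymm h')
    exact .inr (exists_cap_separating_of_kConnected h hF hFk hvF' (hF' hvF') hvF)
  · obtain ⟨v, hvF, hvF'⟩ := Set.not_subset.mp hFF'
    exact .inl (exists_cap_separating_of_kConnected h hF' hF'k hvF (hF hvF) hvF')

end StarGraph

theorem stmt_15_general {V : Type*} [Fintype V] (G : SimpleGraph V)
    (M : Set V) :
    (vertexConnectivity (StarGraph G Mᶜ M) : ℤ) - 1 ≤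
        (maxIdent (CAP G M) Mᶜ : ℤ) ∧
      (maxIdent (CAP G M) Mᶜ : ℤ) ≤
        (vertexConnectivity (StarGraph G Mᶜ M) : ℤ) := by
  constructor
  · have hδ := kConnected_vertexConnectivity (StarGraph G Mᶜ M)
    generalize vertexConnectivity (StarGraph G Mᶜ M) = d at hδ ⊢
    rcases d with _ | k
    · omega
    · have : k ≤ maxIdent (CAP G M) Mᶜ :=
        le_maxIdent (by have := hδ.le_ncard; omega) (identifiable_of_kConnected hδ)
      push_cast
      omega
  · exact_mod_cast maxIdent_le fun k hkσ hk =>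
      (kConnected_starGraph_of_identifiable hk hkσ).le_vertexConnectivity

/-- Maximum identifiability under CAP: if `δ(G*) ≤ σ − 1` then
`δ(G*) − 1 ≤ Ω_CAP(G) ≤ δ(G*)`. -/
theorem stmt_15 {V : Type*} [Fintype V] (G : SimpleGraph V) (hG : G.Connected)
    (M : Set V) (hM : M.Nonempty)
    (h : (vertexConnectivity (StarGraph G Mᶜ M) : ℤ) ≤ (Mᶜ.ncard : ℤ) - 1) :
    (vertexConnectivity (StarGraph G Mᶜ M) : ℤ) - 1 ≤
        (maxIdent (CAP G M) Mᶜ : ℤ) ∧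
      (maxIdent (CAP G M) Mᶜ : ℤ) ≤
        (vertexConnectivity (StarGraph G Mᶜ M) : ℤ) :=
  stmt_15_general G M
end

section
/- Let k be an integer with 1 ≤ k ≤ σ − 1. If G is k-identifiable under CSP, then the auxiliary graph G* is (k+1)-vertex-connected and, for every monitor m ∈ M, the auxiliary graph G_m is k-vertex-connected. -/
open SimpleGraph

/-! If removing a set `S` disconnects `G*` (resp. `G_m`), then, since `m'` and the non-monitors
with a monitor neighbour form a clique, some component `C` of the remainder contains none of them.
A CSP path through a vertex `u ∈ C` runs between monitors, so it enters and leaves `C` through two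
distinct vertices of `S` (resp. of `S ∪ {m}`). So if `F` is the set of non-monitors of `S` less
one of them (resp. all of them), every CSP path through `u` meets `F`, and `F` and `F ∪ {u}` are
failure sets of size at most `k` that no CSP path distinguishes. -/

namespace SimpleGraph

/-- Followed from `u` back to `a` and on to `b`, the path leaves `C` through a vertex of `B` each
time, and these two vertices differ since the path is simple. -/
theorem Walk.IsPath.exists_ne_mem_support_of_boundary {V : Type*} {G : SimpleGraph V}
    {a b u : V} {w : G.Walk a b} (hw : w.IsPath) {C B : Set V}
    (hC : ∀ c ∈ C, ∀ z, G.Adj c z → z ∈ C ∨ z ∈ B) (ha : a ∉ C) (hb : b ∉ C)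
    (hu : u ∈ w.support) (huC : u ∈ C) :
    ∃ x ∈ B, ∃ y ∈ B, x ≠ y ∧ x ∈ w.support ∧ y ∈ w.support := by
  obtain ⟨q, r, rfl⟩ := Walk.mem_support_iff_exists_append.mp hu
  obtain ⟨d, hd, hdC, hdC'⟩ := q.reverse.exists_boundary_dart C huC ha
  obtain ⟨e, he, heC, heC'⟩ := r.exists_boundary_dart C huC hb
  have hdq : d.snd ∈ q.support := by
    simpa using q.reverse.dart_snd_mem_support_of_mem_darts hd
  have her : e.snd ∈ r.support.tail := by
    have h := r.dart_snd_mem_support_of_mem_darts he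
    rw [← Walk.cons_tail_support] at h
    exact (List.mem_cons.mp h).resolve_left fun h' => heC' (h' ▸ huC)
  have hnodup := hw.support_nodup
  rw [Walk.support_append, List.nodup_append] at hnodup
  refine ⟨d.snd, (hC _ hdC _ d.adj).resolve_left hdC', e.snd,
    (hC _ heC _ e.adj).resolve_left heC', hnodup.2.2 _ hdq _ her, ?_, ?_⟩
  · exact (q.mem_support_append_iff r).mpr (Or.inl hdq)
  · exact (q.mem_support_append_iff r).mpr (Or.inr (List.mem_of_mem_tail her))

theorem exists_forall_reachable_notMem_of_isClique {W : Type*} {H : SimpleGraph W}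
    (hH : ¬ H.Preconnected) {K : Set W} (hK : H.IsClique K) :
    ∃ x, ∀ z, H.Reachable x z → z ∉ K := by
  by_contra! h
  refine hH fun x y => ?_
  obtain ⟨zx, hxzx, hzx⟩ := h x
  obtain ⟨zy, hyzy, hzy⟩ := h y
  obtain rfl | hne := eq_or_ne zx zy
  · exact hxzx.trans hyzy.symm
  · exact hxzx.trans ((hK hzx hzy hne).reachable.trans hyzy.symm)

end SimpleGraph

theorem Set.exists_subset_ncard_lt_mem_or_mem {α : Type*} [Finite α] {T : Set α} {k : ℕ}
    (hT : T.ncard ≤ k) (hk : 1 ≤ k) :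
    ∃ F ⊆ T, F.ncard < k ∧ ∀ x ∈ T, ∀ y ∈ T, x ≠ y → x ∈ F ∨ y ∈ F := by
  rcases T.eq_empty_or_nonempty with rfl | ⟨s, hs⟩
  · exact ⟨∅, subset_rfl, by rw [Set.ncard_empty]; omega, by simp⟩
  refine ⟨T \ {s}, Set.sdiff_subset, (Set.ncard_sdiff_singleton_lt_of_mem hs).trans_le hT,
    fun x hx y hy hxy => ?_⟩
  by_cases hxs : x = s
  · exact Or.inr ⟨hy, fun hys => hxy (hxs.trans hys.symm)⟩
  · exact Or.inl ⟨hx, hxs⟩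

theorem Identifiable.exists_traverses_of_notMem {V : Type*} {G : SimpleGraph V}
    {P : Set (MWalk G)} {Nm : Set V} {k : ℕ} (hid : Identifiable P Nm k) {F : Set V}
    (hF : F ⊆ Nm) (hFk : F.ncard < k) {u : V} (hu : u ∈ Nm) (huF : u ∉ F) :
    ∃ p ∈ P, Traverses p u ∧ ∀ x ∈ F, ¬ Traverses p x := by
  have hne : F ≠ insert u F := fun h => huF (h ▸ Set.mem_insert u F)
  rcases hid F (insert u F) hF (Set.insert_subset hu hF) hFk.le
      ((Set.ncard_insert_le u F).trans hFk) hne with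
    ⟨p, -, ⟨x, hx, hpx⟩, hp⟩ | ⟨p, hp, ⟨x, rfl | hx, hpx⟩, hpF⟩
  · exact absurd hpx (hp x (Set.mem_insert_of_mem u hx))
  · exact ⟨p, hp, hpx, hpF⟩
  · exact absurd hpx (hpF x hx)

section StarGraph

variable {V : Type*} {G : SimpleGraph V}

/-- The vertices of `S` other than the virtual monitor `none`, as vertices of `G`. -/
def realVertices {Nm : Set V} (S : Set (Option ↥Nm)) : Set V :=
  Subtype.val '' (some ⁻¹' S)

theorem realVertices_subset {Nm : Set V} (S : Set (Option ↥Nm)) : realVertices S ⊆ Nm :=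
  Subtype.coe_image_subset _ _

theorem ncard_realVertices_le [Finite V] {Nm : Set V} (S : Set (Option ↥Nm)) :
    (realVertices S).ncard ≤ S.ncard :=
  (Set.ncard_image_le (Set.toFinite _)).trans <|
    Set.ncard_le_ncard_of_injOn some (fun _ h => h) (Option.some_injective _).injOn

theorem isClique_starGraph {Nm M' : Set V} :
    (StarGraph G Nm M').IsClique {z | ∀ w ∈ z, ∃ m ∈ M', G.Adj (w : V) m} := by
  rintro (_ | w₁) h₁ (_ | w₂) h₂ hne
  · exact absurd rfl hne
  · exact h₂ w₂ rfl
  · exact h₁ w₁ rfl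
  · exact ⟨fun h => hne (congrArg some (Subtype.ext h)), Or.inr ⟨h₁ w₁ rfl, h₂ w₂ rfl⟩⟩

theorem exists_forall_csp_traverses_two_of_not_preconnected {M M' : Set V}
    {S : Set (Option ↥Mᶜ)} (hS : ¬ ((StarGraph G Mᶜ M').induce Sᶜ).Preconnected) :
    ∃ u : ↥Mᶜ, some u ∉ S ∧ ∀ p ∈ CSP G M, Traverses p u →
      ∃ x ∈ realVertices S ∪ (M \ M'), ∃ y ∈ realVertices S ∪ (M \ M'),
        x ≠ y ∧ Traverses p x ∧ Traverses p y := by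
  set H := (StarGraph G Mᶜ M').induce Sᶜ
  obtain ⟨⟨_ | u, hu⟩, hx₀⟩ := exists_forall_reachable_notMem_of_isClique hS
    (K := Subtype.val ⁻¹' {z | ∀ w ∈ z, ∃ m ∈ M', G.Adj (w : V) m})
    fun a ha b hb hab => isClique_starGraph ha hb (Subtype.val_injective.ne hab)
  · exact absurd (fun w hw => nomatch hw) (hx₀ _ .rfl)
  -- the component of `some u`, as vertices of `G`; by the choice of `u` none is adjacent to `M'`
  set C : Set V := {v | ∃ (hv : v ∈ Mᶜ) (hvS : some ⟨v, hv⟩ ∈ Sᶜ),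
    H.Reachable ⟨some u, hu⟩ ⟨some ⟨v, hv⟩, hvS⟩}
  have hC : ∀ c ∈ C, ∀ z, G.Adj c z → z ∈ C ∨ z ∈ realVertices S ∪ (M \ M') := by
    rintro c ⟨hc, hcS, hreach⟩ z hcz
    by_cases hzM : z ∈ M
    · refine Or.inr (Or.inr ⟨hzM, fun hzM' => hx₀ _ hreach fun w hw => ?_⟩)
      obtain rfl := Option.some_inj.mp hw
      exact ⟨z, hzM', hcz⟩
    by_cases hzS : some ⟨z, hzM⟩ ∈ S
    · exact Or.inr (Or.inl ⟨⟨z, hzM⟩, hzS, rfl⟩)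
    refine Or.inl ⟨hzM, hzS, hreach.trans (Adj.reachable ?_)⟩
    exact ⟨hcz.ne, Or.inl hcz⟩
  refine ⟨u, hu, ?_⟩
  rintro ⟨m₁, m₂, w⟩ ⟨hm₁, hm₂, -, hw⟩ hwu
  exact hw.exists_ne_mem_support_of_boundary hC (fun h => h.1 hm₁) (fun h => h.1 hm₂) hwu
    ⟨u.2, hu, .rfl⟩

theorem induce_starGraph_connected_of_identifiable [Finite V] {M M' : Set V} {k : ℕ}
    (hid : Identifiable (CSP G M) Mᶜ k) {S : Set (Option ↥Mᶜ)} (hS : Sᶜ.Nonempty)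
    {F : Set V} (hFS : F ⊆ realVertices S) (hFk : F.ncard < k)
    (hF : ∀ x ∈ realVertices S ∪ (M \ M'), ∀ y ∈ realVertices S ∪ (M \ M'),
      x ≠ y → x ∈ F ∨ y ∈ F) :
    ((StarGraph G Mᶜ M').induce Sᶜ).Connected := by
  have : Nonempty ↥Sᶜ := hS.to_subtype
  refine ⟨?_⟩
  by_contra hpre
  obtain ⟨u, huS, hu⟩ := exists_forall_csp_traverses_two_of_not_preconnected hpre
  have huF : (u : V) ∉ F := by
    rintro h
    obtain ⟨v, hv, hvu⟩ := hFS h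
    exact huS (Subtype.ext hvu ▸ hv)
  obtain ⟨p, hp, hpu, hpF⟩ :=
    hid.exists_traverses_of_notMem (hFS.trans (realVertices_subset S)) hFk u.2 huF
  obtain ⟨x, hx, y, hy, hxy, hpx, hpy⟩ := hu p hp hpu
  rcases hF x hx y hy hxy with h | h
  exacts [hpF x h hpx, hpF y h hpy]

end StarGraph

theorem stmt_17_general {V : Type*} [Fintype V] (G : SimpleGraph V)
    (M : Set V) (k : ℕ) (hk1 : 1 ≤ k)
    (hk : k + 1 ≤ Mᶜ.ncard) (hid : Identifiable (CSP G M) Mᶜ k) :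
    KConnected (StarGraph G Mᶜ M) (k + 1) ∧
      ∀ m ∈ M, KConnected (StarGraph G Mᶜ (M \ {m})) k := by
  have hcard : Nat.card (Option ↥Mᶜ) = Mᶜ.ncard + 1 := by
    rw [Finite.card_option, Nat.card_coe_set_eq]
  have hS : ∀ S : Set (Option ↥Mᶜ), S.ncard ≤ k → Sᶜ.Nonempty := fun S hS =>
    Set.nonempty_compl.mpr fun h => by rw [h, Set.ncard_univ] at hS; omega
  refine ⟨⟨by omega, fun S hSk => ?_⟩, fun m hm => ⟨by omega, fun S hSk => ?_⟩⟩
  · obtain ⟨F, hFS, hFk, hF⟩ :=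
      Set.exists_subset_ncard_lt_mem_or_mem ((ncard_realVertices_le S).trans (by omega)) hk1
    refine induce_starGraph_connected_of_identifiable hid (hS S (by omega)) hFS hFk ?_
    simpa only [Set.sdiff_self, Set.union_empty] using hF
  · refine induce_starGraph_connected_of_identifiable hid (hS S (by omega)) subset_rfl
      ((ncard_realVertices_le S).trans_lt hSk) ?_
    rw [Set.sdiff_sdiff_cancel_left (Set.singleton_subset_iff.mpr hm)]
    intro x hx y hy hxy
    by_contra! h
    exact hxy ((hx.resolve_left h.1).trans (hy.resolve_left h.2).symm)

/-- If `1 ≤ k ≤ σ − 1` and `G` is `k`-identifiable under CSP, then the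
auxiliary graph `G*` is `(k+1)`-vertex-connected and `G_m` is
`k`-vertex-connected for every monitor `m`. -/
theorem stmt_17 {V : Type*} [Fintype V] (G : SimpleGraph V) (hG : G.Connected)
    (M : Set V) (hM : M.Nonempty) (k : ℕ) (hk1 : 1 ≤ k)
    (hk : k + 1 ≤ Mᶜ.ncard) (hid : Identifiable (CSP G M) Mᶜ k) :
    KConnected (StarGraph G Mᶜ M) (k + 1) ∧
      ∀ m ∈ M, KConnected (StarGraph G Mᶜ (M \ {m})) k :=
  stmt_17_general G M k hk1 hk hid
end
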